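/- arXiv:1604.03962 — 3 statements merged into one kernel-verified Lean document; each statement's English description precedes it below -/
import Mathlib

section
/- Soundness of the tableau: if an LTL formula φ has a successful tableau (i.e. a tableau for φ, built according to the rules, containing at least one ticked leaf), then φ is satisfiable, i.e. there exists an ω-word σ : ℕ → Set AP with σ ⊨ φ. -/
/-- LTL formulas over atomic propositions `AP`, built from atoms using
negation, conjunction, next (X) and until (U). -/
inductive LTL (AP : Type) : Type
  | atom : AP → LTL AP
  | neg : LTL AP → LTL AP
  | and : LTL AP → LTL AP → LTL AP
  | next : LTL AP → LTL AP
  | until_ : LTL AP → LTL AP → LTL AP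
  deriving DecidableEq

namespace LTL

variable {AP : Type}

/-- The shifted ω-word `σ_{≥i}`. -/
def shift (σ : ℕ → Set AP) (i : ℕ) : ℕ → Set AP := fun j => σ (i + j)

/-- Satisfaction of an LTL formula on an ω-word. -/
def Sat : (ℕ → Set AP) → LTL AP → Prop
  | σ, atom p => p ∈ σ 0
  | σ, neg α => ¬ Sat σ α
  | σ, and α β => Sat σ α ∧ Sat σ β
  | σ, next α => Sat (shift σ 1) α
  | σ, until_ α β => ∃ i, Sat (shift σ i) β ∧ ∀ j < i, Sat (shift σ j) α

/-- A formula is satisfiable iff some ω-word satisfies it. -/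
def Satisfiable (φ : LTL AP) : Prop := ∃ σ : ℕ → Set AP, Sat σ φ

/-- Standard abbreviations. -/
def or' (α β : LTL AP) : LTL AP := neg ((neg α).and (neg β))
def imp (α β : LTL AP) : LTL AP := or' (neg α) β
def iff' (α β : LTL AP) : LTL AP := (imp α β).and (imp β α)
/-- `⊤ ≡ p ∨ ¬p`. -/
def top (p : AP) : LTL AP := or' (atom p) (neg (atom p))
/-- `⊥ ≡ ¬⊤`. -/
def bot (p : AP) : LTL AP := neg (top p)
/-- `F α ≡ ⊤ U α`. -/
def F (p : AP) (α : LTL AP) : LTL AP := (top p).until_ α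
/-- `G α ≡ ¬F¬α`. -/
def G (p : AP) (α : LTL AP) : LTL AP := neg (F p (neg α))

/-- Elementary formulas: atoms, negated atoms, `Xα` and `¬Xα`. -/
def Elementary : LTL AP → Prop
  | atom _ => True
  | neg (atom _) => True
  | next _ => True
  | neg (next _) => True
  | _ => False

/-- A finite set of formulas is poised when it is nonempty, contains no direct
contradiction, and all of its members are elementary. -/
def Poised (Γ : Finset (LTL AP)) : Prop :=
  Γ.Nonempty ∧ (∀ α : LTL AP, ¬(α ∈ Γ ∧ neg α ∈ Γ)) ∧ ∀ ψ ∈ Γ, Elementary ψ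

/-- The label of the TRANSITION child: `{α : Xα ∈ Γ} ∪ {¬α : ¬Xα ∈ Γ}`. -/
def nextLabel [DecidableEq AP] (Γ : Finset (LTL AP)) : Finset (LTL AP) :=
  Γ.biUnion fun ψ =>
    match ψ with
    | next α => {α}
    | neg (next α) => {neg α}
    | _ => (∅ : Finset (LTL AP))

/-- Static rules with one child (consuming the decomposed formula). -/
inductive Static1 [DecidableEq AP] : Finset (LTL AP) → Finset (LTL AP) → Prop
  | conj (α β : LTL AP) (Δ : Finset (LTL AP)) (h : α.and β ∉ Δ) :
      Static1 (insert (α.and β) Δ) (insert α (insert β Δ))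
  | negneg (α : LTL AP) (Δ : Finset (LTL AP)) (h : neg (neg α) ∉ Δ) :
      Static1 (insert (neg (neg α)) Δ) (insert α Δ)

/-- Static rules with two children (consuming the decomposed formula). -/
inductive Static2 [DecidableEq AP] :
    Finset (LTL AP) → Finset (LTL AP) → Finset (LTL AP) → Prop
  | negconj (α β : LTL AP) (Δ : Finset (LTL AP)) (h : neg (α.and β) ∉ Δ) :
      Static2 (insert (neg (α.and β)) Δ) (insert (neg α) Δ) (insert (neg β) Δ)
  | untl (α β : LTL AP) (Δ : Finset (LTL AP)) (h : α.until_ β ∉ Δ) :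
      Static2 (insert (α.until_ β) Δ) (insert β Δ)
        (insert α (insert (next (α.until_ β)) Δ))
  | neguntl (α β : LTL AP) (Δ : Finset (LTL AP)) (h : neg (α.until_ β) ∉ Δ) :
      Static2 (insert (neg (α.until_ β)) Δ)
        (insert (neg α) (insert (neg β) Δ))
        (insert (neg β) (insert (next (neg (α.until_ β))) Δ))

/-- Label at position `i` of a list of labels (default `∅`). -/
def labelAt (L : List (Finset (LTL AP))) (i : ℕ) : Finset (LTL AP) := L.getD i ∅

/-- LOOP rule condition for a node labelled `Γ` whose list of proper-ancestor
labels (root first) is `anc`: some poised proper ancestor `u` has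
`Γ_u ⊇ Γ`, and every X-eventuality `X(αUβ)` of `Γ_u` is fulfilled by some node
`w` with `u < w ≤ v` (`v` being the current node, of index `anc.length`). -/
def LoopCond (anc : List (Finset (LTL AP))) (Γ : Finset (LTL AP)) : Prop :=
  ∃ u < anc.length, Poised (labelAt anc u) ∧ Γ ⊆ labelAt anc u ∧
    ∀ α β : LTL AP, next (α.until_ β) ∈ labelAt anc u →
      ∃ w, u < w ∧ w ≤ anc.length ∧ β ∈ labelAt (anc ++ [Γ]) w

/-- PRUNE rule condition: `u < v < w` all bear the same poised label `Γ`
(`w` the current node) and every X-eventuality of `Γ` fulfilled in `(v,w]` is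
also fulfilled in `(u,v]`. -/
def PruneCond (anc : List (Finset (LTL AP))) (Γ : Finset (LTL AP)) : Prop :=
  ∃ u v, u < v ∧ v < anc.length ∧ labelAt anc u = Γ ∧ labelAt anc v = Γ ∧
    ∀ α β : LTL AP, next (α.until_ β) ∈ Γ →
      (∃ x, v < x ∧ x ≤ anc.length ∧ β ∈ labelAt (anc ++ [Γ]) x) →
      (∃ y, u < y ∧ y ≤ v ∧ β ∈ labelAt anc y)

/-- PRUNE₀ rule condition: some proper ancestor `u` has the same poised label
`Γ` as the current node `v`, `Γ` contains at least one X-eventuality and no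
X-eventuality of `Γ` is fulfilled in `(u,v]`. -/
def Prune0Cond (anc : List (Finset (LTL AP))) (Γ : Finset (LTL AP)) : Prop :=
  ∃ u < anc.length, labelAt anc u = Γ ∧
    (∃ α β : LTL AP, next (α.until_ β) ∈ Γ) ∧
    ∀ α β : LTL AP, next (α.until_ β) ∈ Γ →
      ¬ ∃ x, u < x ∧ x ≤ anc.length ∧ β ∈ labelAt (anc ++ [Γ]) x

end LTL

open LTL in
/-- Tableau trees: ticked leaves, crossed leaves, unfinished leaves and inner
nodes with one or two children; every node carries a finite set of formulas. -/
inductive Tab (AP : Type) : Type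
  | tick : Finset (LTL AP) → Tab AP
  | cross : Finset (LTL AP) → Tab AP
  | unfin : Finset (LTL AP) → Tab AP
  | node1 : Finset (LTL AP) → Tab AP → Tab AP
  | node2 : Finset (LTL AP) → Tab AP → Tab AP → Tab AP

namespace Tab

variable {AP : Type}

def label : Tab AP → Finset (LTL AP)
  | tick Γ => Γ
  | cross Γ => Γ
  | unfin Γ => Γ
  | node1 Γ _ => Γ
  | node2 Γ _ _ => Γ

/-- A tableau is finished when every leaf is ticked or crossed. -/
def Finished : Tab AP → Prop
  | tick _ => True
  | cross _ => True
  | unfin _ => False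
  | node1 _ t => t.Finished
  | node2 _ t₁ t₂ => t₁.Finished ∧ t₂.Finished

/-- A tableau is successful when it has at least one ticked leaf. -/
def Successful : Tab AP → Prop
  | tick _ => True
  | cross _ => False
  | unfin _ => False
  | node1 _ t => t.Successful
  | node2 _ t₁ t₂ => t₁.Successful ∨ t₂.Successful

end Tab

open LTL in
/-- `Valid anc t` : the tree `t` is built according to the tableau rules, where
`anc` is the list of labels of the proper ancestors of the root of `t`
(root of the whole tableau first). -/
inductive Valid {AP : Type} [DecidableEq AP] :
    List (Finset (LTL AP)) → Tab AP → Prop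
  | empty (anc) : Valid anc (Tab.tick (∅ : Finset (LTL AP)))
  | contra (anc) (Γ : Finset (LTL AP)) (α : LTL AP)
      (h1 : α ∈ Γ) (h2 : LTL.neg α ∈ Γ) : Valid anc (Tab.cross Γ)
  | unfin (anc) (Γ : Finset (LTL AP)) : Valid anc (Tab.unfin Γ)
  | static1 (anc) (Γ : Finset (LTL AP)) (t : Tab AP)
      (h : Static1 Γ t.label) (hv : Valid (anc ++ [Γ]) t) :
      Valid anc (Tab.node1 Γ t)
  | static2 (anc) (Γ : Finset (LTL AP)) (t₁ t₂ : Tab AP)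
      (h : Static2 Γ t₁.label t₂.label)
      (hv₁ : Valid (anc ++ [Γ]) t₁) (hv₂ : Valid (anc ++ [Γ]) t₂) :
      Valid anc (Tab.node2 Γ t₁ t₂)
  | loop (anc) (Γ : Finset (LTL AP)) (hp : Poised Γ) (h : LoopCond anc Γ) :
      Valid anc (Tab.tick Γ)
  | prune (anc) (Γ : Finset (LTL AP)) (hp : Poised Γ) (h : PruneCond anc Γ) :
      Valid anc (Tab.cross Γ)
  | prune0 (anc) (Γ : Finset (LTL AP)) (hp : Poised Γ) (h : Prune0Cond anc Γ) :
      Valid anc (Tab.cross Γ)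
  | transition (anc) (Γ : Finset (LTL AP)) (t : Tab AP) (hp : Poised Γ)
      (hl : ¬ LoopCond anc Γ) (hpr : ¬ PruneCond anc Γ)
      (hp0 : ¬ Prune0Cond anc Γ)
      (h : t.label = nextLabel Γ) (hv : Valid (anc ++ [Γ]) t) :
      Valid anc (Tab.node1 Γ t)

/-- `T` is a tableau for `φ`: root labelled `{φ}` and built by the rules. -/
def IsTableauFor {AP : Type} [DecidableEq AP] (φ : LTL AP) (T : Tab AP) : Prop :=
  T.label = {φ} ∧ Valid [] T

open LTL in
/-- A node must be made a leaf whenever EMPTY, CONTRADICTION, LOOP, PRUNE or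
PRUNE₀ applies to it. -/
def ForcedLeaf {AP : Type} [DecidableEq AP]
    (anc : List (Finset (LTL AP))) (Γ : Finset (LTL AP)) : Prop :=
  Γ = ∅ ∨ (∃ α : LTL AP, α ∈ Γ ∧ LTL.neg α ∈ Γ) ∨
    (Poised Γ ∧ (LoopCond anc Γ ∨ PruneCond anc Γ ∨ Prune0Cond anc Γ))

open LTL in
/-- One step of branch construction: from a node labelled `Γ` with proper
ancestor labels `anc` (root first), which is not forced to be a leaf, to a
child labelled `Δ` obtained by a static rule or by TRANSITION. -/
def BranchStep {AP : Type} [DecidableEq AP]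
    (anc : List (Finset (LTL AP))) (Γ Δ : Finset (LTL AP)) : Prop :=
  ¬ ForcedLeaf anc Γ ∧
    (Static1 Γ Δ ∨ (∃ Δ', Static2 Γ Δ Δ') ∨ (∃ Δ', Static2 Γ Δ' Δ) ∨
      (Poised Γ ∧ Δ = nextLabel Γ))

namespace LTL

/-- `seg Γ a b = ⋃ { Γ s : a ≤ s ≤ b }`. -/
def seg {AP : Type} (Γ : ℕ → Finset (LTL AP)) (a b : ℕ) : Set (LTL AP) :=
  {ψ | ∃ s, a ≤ s ∧ s ≤ b ∧ ψ ∈ Γ s}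

end LTL

open LTL in
/-- A branch `x_0, …, x_n` of a tableau for `φ` ending in a tick via EMPTY or
LOOP, described by its sequence of labels `Γ`, with `j 0 < … < j (k-1)` the
indices at which the TRANSITION rule is applied, and, in the LOOP case, `l`
the index such that `x_{j l}` is the matching poised ancestor. -/
structure TickedBranch (AP : Type) [DecidableEq AP] (φ : LTL AP) where
  n : ℕ
  Γ : ℕ → Finset (LTL AP)
  k : ℕ
  j : ℕ → ℕ
  viaEmpty : Bool
  l : ℕ
  root : Γ 0 = {φ}
  jmono : ∀ ⦃a b : ℕ⦄, a < b → b < k → j a < j b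
  jlt : ∀ i < k, j i < n
  trans_step : ∀ i < k, Poised (Γ (j i)) ∧ Γ (j i + 1) = nextLabel (Γ (j i))
  static_step : ∀ s < n, (¬ ∃ i < k, j i = s) →
    Static1 (Γ s) (Γ (s + 1)) ∨ (∃ Δ', Static2 (Γ s) (Γ (s + 1)) Δ') ∨
      (∃ Δ', Static2 (Γ s) Δ' (Γ (s + 1)))
  /-- in the EMPTY case we set `j k = n` -/
  jk : viaEmpty = true → j k = n
  empty_end : viaEmpty = true → Γ n = ∅
  loop_end : viaEmpty = false → l < k ∧ Poised (Γ n) ∧ Γ n ⊆ Γ (j l) ∧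
    ∀ α β : LTL AP, LTL.next (α.until_ β) ∈ Γ (j l) →
      ∃ w, j l < w ∧ w ≤ n ∧ β ∈ Γ w

namespace TickedBranch

open LTL

variable {AP : Type} [DecidableEq AP] {φ : LTL AP}

/-- `N = k - 1` in the EMPTY case, `N = l` in the LOOP case. -/
def N (b : TickedBranch AP φ) : ℕ := if b.viaEmpty then b.k - 1 else b.l

/-- `M = 1` in the EMPTY case, `M = k - l` in the LOOP case. -/
def M (b : TickedBranch AP φ) : ℕ := if b.viaEmpty then 1 else b.k - b.l

/-- `Δ_i` for `0 ≤ i ≤ N + M - 1` : the union of the labels strictly after the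
`(i-1)`-th TRANSITION up to the `i`-th one (reading `j_{-1} = -1`), where
`Δ_N` additionally collects the labels strictly after the `(k-1)`-th
TRANSITION up to the end `n` of the branch. -/
def deltaBase (b : TickedBranch AP φ) (i : ℕ) : Set (LTL AP) :=
  if i = b.N then
    seg b.Γ (if b.N = 0 then 0 else b.j (b.N - 1) + 1) (b.j b.N) ∪
      seg b.Γ (b.j (b.k - 1) + 1) b.n
  else if i = 0 then seg b.Γ 0 (b.j 0)
  else seg b.Γ (b.j (i - 1) + 1) (b.j i)

/-- The state-label sequence `(Δ_i)_{i ≥ 0}` extracted from the branch: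
for `i ≥ N + M`, `Δ_i = Δ_{(i-N) mod M + N}`. -/
def delta (b : TickedBranch AP φ) (i : ℕ) : Set (LTL AP) :=
  if i < b.N + b.M then b.deltaBase i else b.deltaBase ((i - b.N) % b.M + b.N)

end TickedBranch

namespace LTL

/-- Length of a formula: number of nodes of its syntax tree. -/
def length {AP : Type} : LTL AP → ℕ
  | atom _ => 1
  | neg α => α.length + 1
  | and α β => α.length + β.length + 1
  | next α => α.length + 1
  | until_ α β => α.length + β.length + 1

/-- The set of subformulas of a formula. -/
def subf {AP : Type} [DecidableEq AP] : LTL AP → Finset (LTL AP)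
  | atom p => {atom p}
  | neg α => insert (neg α) α.subf
  | and α β => insert (α.and β) (α.subf ∪ β.subf)
  | next α => insert (next α) α.subf
  | until_ α β => insert (α.until_ β) (α.subf ∪ β.subf)

/-- The closure set of `φ` :
`{ψ, ¬ψ : ψ ≤ φ} ∪ {X(αUβ), ¬X(αUβ) : αUβ ≤ φ}`. -/
def closure {AP : Type} [DecidableEq AP] (φ : LTL AP) : Finset (LTL AP) :=
  φ.subf ∪ φ.subf.image neg ∪
    φ.subf.biUnion fun ψ =>
      match ψ with
      | until_ α β => {next (α.until_ β), neg (next (α.until_ β))}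
      | _ => (∅ : Finset (LTL AP))

/-- Right-nested conjunction of a nonempty list of conjuncts. -/
def conjAll {AP : Type} : LTL AP → List (LTL AP) → LTL AP
  | γ, [] => γ
  | γ, c :: t => γ.and (conjAll c t)

end LTL

/-!
A ticked leaf ends a branch whose last label is either `∅` (EMPTY) or contained in the label of a
poised ancestor `u` whose X-eventualities are all fulfilled between `u` and the leaf (LOOP).
Padding the branch with `∅`, respectively repeating its segment after `u` forever, gives an
infinite run through the rules in which infinitely often a state (a consistent set of elementary
formulas) occurs whose X-eventualities are all fulfilled later. Splitting the run after each
state, where TRANSITION moves to the next instant, the unions of the blocks form a Hintikka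
sequence, and the word whose `i`-th letter is the set of atoms of block `i` satisfies every
formula of block `i`, in particular `φ`.
-/
namespace LTL

variable {AP : Type}

theorem shift_shift (σ : ℕ → Set AP) (a b : ℕ) : shift (shift σ a) b = shift σ (a + b) := by
  funext j
  simp only [shift, Nat.add_assoc]

def Decomposed : LTL AP → Set (LTL AP) → Prop
  | and α β, S => α ∈ S ∧ β ∈ S
  | neg (neg α), S => α ∈ S
  | neg (and α β), S => neg α ∈ S ∨ neg β ∈ S
  | until_ α β, S => β ∈ S ∨ α ∈ S ∧ next (α.until_ β) ∈ S
  | neg (until_ α β), S =>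
      neg α ∈ S ∧ neg β ∈ S ∨ neg β ∈ S ∧ next (neg (α.until_ β)) ∈ S
  | _, _ => False

theorem Decomposed.mono {ψ : LTL AP} {S T : Set (LTL AP)} (hST : S ⊆ T)
    (h : Decomposed ψ S) : Decomposed ψ T := by
  unfold Decomposed at *
  split at h <;> aesop

theorem Decomposed.not_elementary {ψ : LTL AP} {S : Set (LTL AP)} (h : Decomposed ψ S) :
    ¬ Elementary ψ := by
  unfold Decomposed at h
  split at h <;> simp_all [Elementary]

structure IsHintikka (H : ℕ → Set (LTL AP)) : Prop where
  not_atom_and_neg : ∀ i p, atom p ∈ H i → neg (atom p) ∉ H i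
  decomposed : ∀ i, ∀ ψ ∈ H i, ¬ Elementary ψ → Decomposed ψ (H i)
  next_mem : ∀ i α, next α ∈ H i → α ∈ H (i + 1)
  neg_next_mem : ∀ i α, neg (next α) ∈ H i → neg α ∈ H (i + 1)

def atomWord (H : ℕ → Set (LTL AP)) : ℕ → Set AP := fun i => {p | atom p ∈ H i}

namespace IsHintikka

variable {H : ℕ → Set (LTL AP)} {α β : LTL AP} {i : ℕ}

theorem until_mem_add (hH : IsHintikka H) (hU : α.until_ β ∈ H i) :
    ∀ d, (∀ e < d, β ∉ H (i + e)) → α.until_ β ∈ H (i + d) ∧ ∀ e < d, α ∈ H (i + e)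
  | 0, _ => ⟨hU, fun _ he => absurd he (Nat.not_lt_zero _)⟩
  | d + 1, hβ => by
    obtain ⟨hUd, hα⟩ := hH.until_mem_add hU d fun e he => hβ e (by omega)
    obtain ⟨hαd, hXd⟩ : α ∈ H (i + d) ∧ next (α.until_ β) ∈ H (i + d) :=
      (hH.decomposed _ _ hUd id).resolve_left (hβ d (by omega))
    refine ⟨hH.next_mem _ _ hXd, fun e he => ?_⟩
    obtain he | rfl := Nat.lt_succ_iff_lt_or_eq.1 he
    exacts [hα e he, hαd]

theorem neg_until_mem_add (hH : IsHintikka H) (hU : neg (α.until_ β) ∈ H i) :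
    ∀ d, (∀ e < d, neg α ∉ H (i + e)) → neg (α.until_ β) ∈ H (i + d)
  | 0, _ => hU
  | d + 1, hα => by
    have hUd := hH.neg_until_mem_add hU d fun e he => hα e (by omega)
    exact hH.next_mem _ _ ((hH.decomposed _ _ hUd id).resolve_left
      fun h => hα d (by omega) h.1).2

theorem neg_mem_of_neg_until_mem (hH : IsHintikka H) (hU : neg (α.until_ β) ∈ H i) :
    neg β ∈ H i := by
  rcases hH.decomposed _ _ hU id with h | h
  exacts [h.2, h.1]

/-- The truth lemma, proved for both polarities at once so that the induction is structural. -/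
theorem sat (hH : IsHintikka H)
    (hev : ∀ i (α β : LTL AP), α.until_ β ∈ H i → ∃ m ≥ i, β ∈ H m) (ψ : LTL AP) (i : ℕ) :
    (ψ ∈ H i → Sat (shift (atomWord H) i) ψ) ∧
      (neg ψ ∈ H i → ¬ Sat (shift (atomWord H) i) ψ) := by
  induction ψ generalizing i with
  | atom p =>
    simp only [Sat, shift, atomWord, Nat.add_zero, Set.mem_ofPred_eq]
    exact ⟨id, fun hn h => hH.not_atom_and_neg i p h hn⟩
  | neg α ih =>
    exact ⟨(ih i).2, fun h hn => hn ((ih i).1 (hH.decomposed i _ h id))⟩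
  | and α β ihα ihβ =>
    refine ⟨fun h => ?_, fun h hs => ?_⟩
    · obtain ⟨hα, hβ⟩ := hH.decomposed i _ h id
      exact ⟨(ihα i).1 hα, (ihβ i).1 hβ⟩
    · rcases hH.decomposed i _ h id with h | h
      exacts [(ihα i).2 h hs.1, (ihβ i).2 h hs.2]
  | next α ih =>
    simp only [Sat, shift_shift]
    exact ⟨fun h => (ih _).1 (hH.next_mem i α h), fun h => (ih _).2 (hH.neg_next_mem i α h)⟩
  | until_ α β ihα ihβ =>
    simp only [Sat, shift_shift]
    refine ⟨fun h => ?_, fun h => ?_⟩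
    · classical
      obtain ⟨m, him, hm⟩ := hev i α β h
      have hd : ∃ d, β ∈ H (i + d) := ⟨m - i, by rwa [Nat.add_sub_cancel' him]⟩
      obtain ⟨-, hα⟩ := hH.until_mem_add h (Nat.find hd) fun e he => Nat.find_min hd he
      exact ⟨Nat.find hd, (ihβ _).1 (Nat.find_spec hd), fun e he => (ihα _).1 (hα e he)⟩
    · rintro ⟨d, hβ, hα⟩
      have hUd := hH.neg_until_mem_add h d fun e he hn => (ihα _).2 hn (hα e he)
      exact (ihβ _).2 (hH.neg_mem_of_neg_until_mem hUd) hβ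

end IsHintikka

def IsState (Γ : Finset (LTL AP)) : Prop :=
  (∀ α : LTL AP, ¬(α ∈ Γ ∧ neg α ∈ Γ)) ∧ ∀ ψ ∈ Γ, Elementary ψ

theorem Poised.isState {Γ : Finset (LTL AP)} (h : Poised Γ) : IsState Γ := h.2

theorem isState_empty : IsState (∅ : Finset (LTL AP)) := by
  simp [IsState]

theorem labelAt_append_of_lt {L L' : List (Finset (LTL AP))} {i : ℕ} (h : i < L.length) :
    labelAt (L ++ L') i = labelAt L i :=
  List.getD_append L L' ∅ i h

@[simp]
theorem labelAt_append_singleton_length (L : List (Finset (LTL AP))) (Δ : Finset (LTL AP)) :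
    labelAt (L ++ [Δ]) L.length = Δ := by
  simp [labelAt]

variable [DecidableEq AP]

section Steps

variable {Γ Δ : Finset (LTL AP)}

theorem mem_nextLabel {α : LTL AP} (h : next α ∈ Γ) : α ∈ nextLabel Γ :=
  Finset.mem_biUnion.2 ⟨_, h, by simp⟩

theorem neg_mem_nextLabel {α : LTL AP} (h : neg (next α) ∈ Γ) : neg α ∈ nextLabel Γ :=
  Finset.mem_biUnion.2 ⟨_, h, by simp⟩

theorem nextLabel_mono (h : Γ ⊆ Δ) : nextLabel Γ ⊆ nextLabel Δ :=
  Finset.biUnion_subset_biUnion_of_subset_left _ h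

def StaticChild (Γ Δ : Finset (LTL AP)) : Prop :=
  Static1 Γ Δ ∨ (∃ Δ', Static2 Γ Δ Δ') ∨ ∃ Δ', Static2 Γ Δ' Δ

theorem StaticChild.not_isState (h : StaticChild Γ Δ) : ¬ IsState Γ := by
  rintro ⟨-, hel⟩
  rcases h with h | ⟨_, h⟩ | ⟨_, h⟩ <;> cases h <;> exact hel _ (Finset.mem_insert_self _ _)

theorem StaticChild.mem_or_decomposed (h : StaticChild Γ Δ) {ψ : LTL AP} (hψ : ψ ∈ Γ) :
    ψ ∈ Δ ∨ Decomposed ψ ↑Δ := by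
  rcases h with h | ⟨_, h⟩ | ⟨_, h⟩ <;> cases h <;>
    rcases Finset.mem_insert.1 hψ with rfl | hψ <;> simp [Decomposed, hψ]

def Step (Γ Δ : Finset (LTL AP)) : Prop :=
  StaticChild Γ Δ ∨ IsState Γ ∧ nextLabel Γ ⊆ Δ

theorem Step.staticChild (h : Step Γ Δ) (hΓ : ¬ IsState Γ) : StaticChild Γ Δ :=
  h.resolve_right fun h => hΓ h.1

theorem Step.nextLabel_subset (h : Step Γ Δ) (hΓ : IsState Γ) : nextLabel Γ ⊆ Δ :=
  (h.resolve_left fun h => h.not_isState hΓ).2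

end Steps

structure IsRun (Λ : ℕ → Finset (LTL AP)) : Prop where
  step : ∀ s, Step (Λ s) (Λ (s + 1))
  exists_fulfilling_state : ∀ s, ∃ t ≥ s, IsState (Λ t) ∧
    ∀ α β : LTL AP, next (α.until_ β) ∈ Λ t → ∃ w > t, β ∈ Λ w

abbrev IsStateAt (Λ : ℕ → Finset (LTL AP)) (t : ℕ) : Prop := IsState (Λ t)

open scoped Classical in
/-- Position `s` of a run lies in block `i` when `i` states precede it, so that block `i` ends
with the state at position `Nat.nth _ i`. -/
def block (Λ : ℕ → Finset (LTL AP)) (i : ℕ) : Set (LTL AP) :=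
  {ψ | ∃ s, Nat.count (IsStateAt Λ) s = i ∧ ψ ∈ Λ s}

namespace IsRun

open scoped Classical

variable {Λ : ℕ → Finset (LTL AP)} {ψ : LTL AP} {i : ℕ}

theorem infinite_isState (hΛ : IsRun Λ) : {s | IsStateAt Λ s}.Infinite :=
  Set.infinite_of_forall_exists_gt fun s =>
    let ⟨t, hts, ht, _⟩ := hΛ.exists_fulfilling_state (s + 1)
    ⟨t, ht, hts⟩

theorem isState_nth (hΛ : IsRun Λ) (i : ℕ) : IsState (Λ (Nat.nth (IsStateAt Λ) i)) :=
  Nat.nth_mem_of_infinite hΛ.infinite_isState i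

theorem mem_or_decomposed_of_nth_eq (hΛ : IsRun Λ) :
    ∀ d s, Nat.nth (IsStateAt Λ) (Nat.count (IsStateAt Λ) s) = s + d →
      ψ ∈ Λ s → ψ ∈ Λ (s + d) ∨
        Decomposed ψ (block Λ (Nat.count (IsStateAt Λ) s))
  | 0, _, _, hψ => Or.inl hψ
  | d + 1, s, hd, hψ => by
    have hs : ¬ IsState (Λ s) := fun h => by rw [Nat.nth_count h] at hd; omega
    have hc := Nat.count_succ_eq_count (p := IsStateAt Λ) hs
    rcases ((hΛ.step s).staticChild hs).mem_or_decomposed hψ with h | h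
    · rw [← hc] at hd ⊢
      rw [show s + (d + 1) = s + 1 + d by omega]
      exact hΛ.mem_or_decomposed_of_nth_eq d (s + 1) (by omega) h
    · exact Or.inr (h.mono fun χ hχ => ⟨s + 1, hc, hχ⟩)

theorem mem_nth_or_decomposed (hΛ : IsRun Λ) (hψ : ψ ∈ block Λ i) :
    ψ ∈ Λ (Nat.nth (IsStateAt Λ) i) ∨ Decomposed ψ (block Λ i) := by
  obtain ⟨s, rfl, hψ⟩ := hψ
  have hs := Nat.le_nth_count hΛ.infinite_isState s
  have := hΛ.mem_or_decomposed_of_nth_eq _ s (Nat.add_sub_cancel' hs).symm hψ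
  rwa [Nat.add_sub_cancel' hs] at this

theorem mem_nth_of_mem_block (hΛ : IsRun Λ) (hψ : ψ ∈ block Λ i) (he : Elementary ψ) :
    ψ ∈ Λ (Nat.nth (IsStateAt Λ) i) :=
  (hΛ.mem_nth_or_decomposed hψ).resolve_right fun h => h.not_elementary he

theorem decomposed_of_mem_block (hΛ : IsRun Λ) (hψ : ψ ∈ block Λ i) (he : ¬ Elementary ψ) :
    Decomposed ψ (block Λ i) :=
  (hΛ.mem_nth_or_decomposed hψ).resolve_left fun h => he ((hΛ.isState_nth i).2 ψ h)

theorem mem_block_succ (hΛ : IsRun Λ)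
    (hψ : ψ ∈ nextLabel (Λ (Nat.nth (IsStateAt Λ) i))) : ψ ∈ block Λ (i + 1) := by
  refine ⟨_, ?_, (hΛ.step _).nextLabel_subset (hΛ.isState_nth i) hψ⟩
  rw [Nat.count_succ_eq_succ_count (hΛ.isState_nth i),
    Nat.count_nth_of_infinite hΛ.infinite_isState]

theorem isHintikka (hΛ : IsRun Λ) : IsHintikka (block Λ) where
  not_atom_and_neg i p ha hn := (hΛ.isState_nth i).1 (atom p)
    ⟨hΛ.mem_nth_of_mem_block ha trivial, hΛ.mem_nth_of_mem_block hn trivial⟩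
  decomposed _ _ hψ he := hΛ.decomposed_of_mem_block hψ he
  next_mem _ _ h := hΛ.mem_block_succ (mem_nextLabel (hΛ.mem_nth_of_mem_block h trivial))
  neg_next_mem _ _ h :=
    hΛ.mem_block_succ (neg_mem_nextLabel (hΛ.mem_nth_of_mem_block h trivial))

/-- If `β` never occurred from block `i` on, `X(α U β)` would lie in every later block, hence in
a fulfilling state. -/
theorem until_fulfilled (hΛ : IsRun Λ) (i : ℕ) (α β : LTL AP) (hU : α.until_ β ∈ block Λ i) :
    ∃ m ≥ i, β ∈ block Λ m := by
  by_contra! hβ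
  obtain ⟨t, hts, ht, hful⟩ := hΛ.exists_fulfilling_state (Nat.nth (IsStateAt Λ) i)
  have hit : i ≤ Nat.count (IsStateAt Λ) t := by
    simpa [Nat.count_nth_of_infinite hΛ.infinite_isState] using
      Nat.count_monotone (IsStateAt Λ) hts
  obtain ⟨hUt, -⟩ := hΛ.isHintikka.until_mem_add hU (Nat.count (IsStateAt Λ) t - i)
    fun e _ => hβ _ (by omega)
  rw [Nat.add_sub_cancel' hit] at hUt
  obtain ⟨-, hX⟩ := (hΛ.isHintikka.decomposed _ _ hUt id).resolve_left (hβ _ hit)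
  have hXt := hΛ.mem_nth_of_mem_block hX trivial
  rw [Nat.nth_count ht] at hXt
  obtain ⟨w, hwt, hw⟩ := hful α β hXt
  exact hβ _ (hit.trans (Nat.count_monotone (IsStateAt Λ) hwt.le)) ⟨w, rfl, hw⟩

theorem satisfiable (hΛ : IsRun Λ) {φ : LTL AP} (hφ : φ ∈ Λ 0) : ∃ σ : ℕ → Set AP, Sat σ φ :=
  ⟨_, (hΛ.isHintikka.sat hΛ.until_fulfilled φ 0).1 ⟨0, Nat.count_zero _, hφ⟩⟩

end IsRun

variable {Γ : ℕ → Finset (LTL AP)} {n : ℕ}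

def EndsTicked (Γ : ℕ → Finset (LTL AP)) (n : ℕ) : Prop :=
  Γ n = ∅ ∨ IsState (Γ n) ∧ ∃ u < n, IsState (Γ u) ∧ Γ n ⊆ Γ u ∧
    ∀ α β : LTL AP, next (α.until_ β) ∈ Γ u → ∃ w, u < w ∧ w ≤ n ∧ β ∈ Γ w

theorem isRun_of_empty (hstep : ∀ s < n, Step (Γ s) (Γ (s + 1))) (hn : Γ n = ∅) :
    IsRun fun s => Γ (min s n) where
  step s := by
    rcases lt_or_ge s n with hs | hs
    · rw [min_eq_left hs.le, min_eq_left hs]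
      exact hstep s hs
    · rw [min_eq_right hs, min_eq_right (by omega), hn]
      exact Or.inr ⟨isState_empty, by simp [nextLabel]⟩
  exists_fulfilling_state s := ⟨max s n, le_max_left s n, by simp [hn, isState_empty]⟩

/-- The index in `0, …, n` visited at time `s` when the segment `u + 1, …, n` is repeated
forever. -/
def loopIndex (u n : ℕ) : ℕ → ℕ
  | 0 => 0
  | s + 1 => if loopIndex u n s = n then u + 1 else loopIndex u n s + 1

variable {u : ℕ}

theorem loopIndex_succ_of_eq {s : ℕ} (h : loopIndex u n s = n) :
    loopIndex u n (s + 1) = u + 1 := if_pos h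

theorem loopIndex_succ_of_ne {s : ℕ} (h : loopIndex u n s ≠ n) :
    loopIndex u n (s + 1) = loopIndex u n s + 1 := if_neg h

theorem loopIndex_le (hu : u < n) : ∀ s, loopIndex u n s ≤ n
  | 0 => Nat.zero_le n
  | s + 1 => by
    by_cases h : loopIndex u n s = n
    · rw [loopIndex_succ_of_eq h]
      omega
    · rw [loopIndex_succ_of_ne h]
      have := loopIndex_le hu s
      omega

theorem loopIndex_add (hu : u < n) (s : ℕ) :
    ∀ d, loopIndex u n s + d ≤ n → loopIndex u n (s + d) = loopIndex u n s + d
  | 0, _ => rfl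
  | d + 1, hd => by
    rw [← Nat.add_assoc, loopIndex_succ_of_ne (by rw [loopIndex_add hu s d (by omega)]; omega),
      loopIndex_add hu s d (by omega), Nat.add_assoc]

theorem isRun_of_loop (hstep : ∀ s < n, Step (Γ s) (Γ (s + 1))) (hn : IsState (Γ n))
    (hu : u < n) (hΓu : IsState (Γ u)) (hsub : Γ n ⊆ Γ u)
    (hful : ∀ α β : LTL AP, next (α.until_ β) ∈ Γ u → ∃ w, u < w ∧ w ≤ n ∧ β ∈ Γ w) :
    IsRun fun s => Γ (loopIndex u n s) where
  step s := by
    by_cases h : loopIndex u n s = n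
    · rw [loopIndex_succ_of_eq h, h]
      exact Or.inr ⟨hn, (nextLabel_mono hsub).trans ((hstep u hu).nextLabel_subset hΓu)⟩
    · rw [loopIndex_succ_of_ne h]
      exact hstep _ (lt_of_le_of_ne (loopIndex_le hu s) h)
  exists_fulfilling_state s := by
    have hs := loopIndex_le hu s
    have ht : loopIndex u n (s + (n - loopIndex u n s)) = n := by
      rw [loopIndex_add hu s _ (by omega)]
      omega
    refine ⟨_, Nat.le_add_right _ _, by rwa [ht], fun α β hX => ?_⟩
    rw [ht] at hX
    obtain ⟨w, huw, hwn, hw⟩ := hful α β (hsub hX)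
    refine ⟨s + (n - loopIndex u n s) + 1 + (w - (u + 1)), by omega, ?_⟩
    rwa [loopIndex_add hu _ _ (by rw [loopIndex_succ_of_eq ht]; omega), loopIndex_succ_of_eq ht,
      Nat.add_sub_cancel' huw]

theorem EndsTicked.exists_isRun (hstep : ∀ s < n, Step (Γ s) (Γ (s + 1)))
    (hend : EndsTicked Γ n) : ∃ Λ, IsRun Λ ∧ Λ 0 = Γ 0 := by
  rcases hend with hn | ⟨hn, u, hu, hΓu, hsub, hful⟩
  · exact ⟨_, isRun_of_empty hstep hn, by simp⟩
  · exact ⟨_, isRun_of_loop hstep hn hu hΓu hsub hful, rfl⟩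

/-- The path `L` from the root extends to a branch `Γ 0, …, Γ n` following the rules and ending
in a ticked leaf. -/
def HasTickedBranch (L : List (Finset (LTL AP))) : Prop :=
  ∃ (Γ : ℕ → Finset (LTL AP)) (n : ℕ), L.length ≤ n + 1 ∧ (∀ i < L.length, Γ i = labelAt L i) ∧
    (∀ s, L.length ≤ s + 1 → s < n → Step (Γ s) (Γ (s + 1))) ∧ EndsTicked Γ n

theorem HasTickedBranch.of_step {L : List (Finset (LTL AP))} {Δ Δ' : Finset (LTL AP)}
    (h : HasTickedBranch (L ++ [Δ] ++ [Δ'])) (hstep : Step Δ Δ') :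
    HasTickedBranch (L ++ [Δ]) := by
  obtain ⟨Γ, n, hn, hpre, hsteps, hend⟩ := h
  refine ⟨Γ, n, ?_, fun i hi => ?_, fun s hs hsn => ?_, hend⟩ <;>
    simp only [List.length_append, List.length_singleton] at *
  · omega
  · rw [hpre i (by omega), labelAt_append_of_lt (by simpa using hi)]
  · obtain rfl | hs := eq_or_lt_of_le (Nat.le_of_succ_le_succ hs)
    · rw [hpre _ (by omega), hpre _ (by omega)]
      simpa [labelAt] using hstep
    · exact hsteps s (by omega) hsn

theorem _root_.Valid.hasTickedBranch {anc : List (Finset (LTL AP))} {T : Tab AP}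
    (hv : Valid anc T) (hs : T.Successful) : HasTickedBranch (anc ++ [T.label]) := by
  induction hv with
  | empty anc =>
    refine ⟨labelAt (anc ++ [∅]), anc.length, by simp, fun _ _ => rfl, fun _ h _ => ?_,
      Or.inl (labelAt_append_singleton_length _ _)⟩
    simp only [List.length_append, List.length_singleton] at h
    omega
  | loop anc Γ hp h =>
    obtain ⟨u, hu, hpu, hsub, hful⟩ := h
    refine ⟨labelAt (anc ++ [Γ]), anc.length, by simp, fun _ _ => rfl, fun _ h _ => ?_,
      Or.inr ⟨?_, u, hu, ?_, ?_, fun α β hX => hful α β ?_⟩⟩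
    all_goals simp only [List.length_append, List.length_singleton,
      labelAt_append_singleton_length, labelAt_append_of_lt hu] at *
    exacts [by omega, hp.isState, hpu.isState, hsub, hX]
  | static1 _ _ _ h _ ih => exact (ih hs).of_step (Or.inl (Or.inl h))
  | static2 _ _ _ _ h _ _ ih₁ ih₂ =>
    rcases hs with hs | hs
    exacts [(ih₁ hs).of_step (Or.inl (Or.inr (Or.inl ⟨_, h⟩))),
      (ih₂ hs).of_step (Or.inl (Or.inr (Or.inr ⟨_, h⟩)))]
  | transition _ _ _ hp _ _ _ h _ ih => exact (ih hs).of_step (Or.inr ⟨hp.isState, h.ge⟩)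
  | contra | unfin | prune | prune0 => exact hs.elim

end LTL

open LTL in
theorem tableau_soundness_general {AP : Type} [DecidableEq AP]
    (φ : LTL AP) (T : Tab AP) (hT : IsTableauFor φ T) (hs : T.Successful) :
    ∃ σ : ℕ → Set AP, Sat σ φ := by
  obtain ⟨hroot, hv⟩ := hT
  obtain ⟨Γ, n, -, hpre, hsteps, hend⟩ := hv.hasTickedBranch hs
  obtain ⟨Λ, hΛ, hΛ0⟩ := hend.exists_isRun fun s hsn => hsteps s (by simp) hsn
  apply hΛ.satisfiable
  rw [hΛ0, hpre 0 (by simp)]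
  simp [labelAt, hroot]

open LTL in
/-- Soundness: if an LTL formula `φ` has a successful tableau
(a tableau for `φ`, built according to the rules, with at least one ticked
leaf), then `φ` is satisfiable. -/
theorem tableau_soundness {AP : Type} [DecidableEq AP] [Countable AP]
    (φ : LTL AP) (T : Tab AP) (hT : IsTableauFor φ T) (hs : T.Successful) :
    ∃ σ : ℕ → Set AP, Sat σ φ :=
  tableau_soundness_general φ T hT hs
end

section
/- Lasso-model form of soundness: if an LTL formula φ has a successful tableau, then φ has an ultimately periodic model, i.e. there exist an ω-word σ : ℕ → Set AP and natural numbers N and M ≥ 1 such that σ(i + M) = σ(i) for all i ≥ N and σ ⊨ φ. -/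
section Part1
open LTL
variable {AP : Type} [DecidableEq AP]
set_option linter.unusedSectionVars false
set_option linter.unreachableTactic false
set_option linter.unusedTactic false

/-- Hintikka sequence conditions. -/
structure Hintikka (D : ℕ → Set (LTL AP)) : Prop where
  consistent : ∀ i (p : AP), LTL.atom p ∈ D i → LTL.neg (LTL.atom p) ∈ D i → False
  hand : ∀ i (α β : LTL AP), LTL.and α β ∈ D i → α ∈ D i ∧ β ∈ D i
  hnegand : ∀ i (α β : LTL AP), LTL.neg (LTL.and α β) ∈ D i →
      LTL.neg α ∈ D i ∨ LTL.neg β ∈ D i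
  hnegneg : ∀ i (α : LTL AP), LTL.neg (LTL.neg α) ∈ D i → α ∈ D i
  hnext : ∀ i (α : LTL AP), LTL.next α ∈ D i → α ∈ D (i+1)
  hnegnext : ∀ i (α : LTL AP), LTL.neg (LTL.next α) ∈ D i → LTL.neg α ∈ D (i+1)
  huntil : ∀ i (α β : LTL AP), LTL.until_ α β ∈ D i →
      ∃ d, β ∈ D (i+d) ∧ ∀ e < d, α ∈ D (i+e)
  hneguntil : ∀ i (α β : LTL AP), LTL.neg (LTL.until_ α β) ∈ D i →
      (LTL.neg α ∈ D i ∧ LTL.neg β ∈ D i) ∨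
      (LTL.neg β ∈ D i ∧ LTL.neg (LTL.until_ α β) ∈ D (i+1))

/-- The word read off a Hintikka sequence. -/
def hWord (D : ℕ → Set (LTL AP)) : ℕ → Set AP := fun m => {p | LTL.atom p ∈ D m}

lemma shift_shift (σ : ℕ → Set AP) (i j : ℕ) :
    shift (shift σ i) j = shift σ (i + j) := by
  funext m; simp [shift, Nat.add_assoc]

lemma length_pos (ψ : LTL AP) : 1 ≤ ψ.length := by
  cases ψ <;> simp [LTL.length] <;> omega

lemma hintikka_sat {D : ℕ → Set (LTL AP)} (h : Hintikka D) :
    ∀ (ψ : LTL AP) (i : ℕ), ψ ∈ D i → Sat (shift (hWord D) i) ψ := by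
  suffices H : ∀ (n : ℕ) (ψ : LTL AP), ψ.length ≤ n → ∀ i, ψ ∈ D i →
      Sat (shift (hWord D) i) ψ by
    intro ψ i hi; exact H ψ.length ψ le_rfl i hi
  intro n
  induction n with
  | zero => intro ψ hl; have := length_pos ψ; omega
  | succ n IH =>
    intro ψ hl i hi
    match ψ with
    | LTL.atom p => exact hi
    | LTL.and α β =>
      obtain ⟨h1, h2⟩ := h.hand i α β hi
      have l1 : α.length ≤ n := by simp [LTL.length] at hl; have := length_pos β; omega
      have l2 : β.length ≤ n := by simp [LTL.length] at hl; have := length_pos α; omega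
      exact ⟨IH α l1 i h1, IH β l2 i h2⟩
    | LTL.next α =>
      have h1 := h.hnext i α hi
      have l1 : α.length ≤ n := by simp [LTL.length] at hl; omega
      have := IH α l1 (i+1) h1
      show Sat (shift (shift (hWord D) i) 1) α
      rwa [shift_shift]
    | LTL.until_ α β =>
      obtain ⟨d, hb, ha⟩ := h.huntil i α β hi
      have l1 : α.length ≤ n := by simp [LTL.length] at hl; have := length_pos β; omega
      have l2 : β.length ≤ n := by simp [LTL.length] at hl; have := length_pos α; omega
      refine ⟨d, ?_, ?_⟩
      · rw [shift_shift]; exact IH β l2 (i+d) hb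
      · intro j hj; rw [shift_shift]; exact IH α l1 (i+j) (ha j hj)
    | LTL.neg ψ' =>
      match ψ' with
      | LTL.atom p =>
        intro hc
        exact h.consistent i p hc hi
      | LTL.neg α =>
        have h1 := h.hnegneg i α hi
        have l1 : α.length ≤ n := by simp [LTL.length] at hl; omega
        intro hc; exact hc (IH α l1 i h1)
      | LTL.and α β =>
        have l1 : (LTL.neg α).length ≤ n := by simp [LTL.length] at hl ⊢; have := length_pos β; omega
        have l2 : (LTL.neg β).length ≤ n := by simp [LTL.length] at hl ⊢; have := length_pos α; omega
        rcases h.hnegand i α β hi with h1 | h1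
        · intro hc; exact (IH (LTL.neg α) l1 i h1) hc.1
        · intro hc; exact (IH (LTL.neg β) l2 i h1) hc.2
      | LTL.next α =>
        have h1 := h.hnegnext i α hi
        have l1 : (LTL.neg α).length ≤ n := by simp [LTL.length] at hl ⊢; omega
        intro hc
        have := IH (LTL.neg α) l1 (i+1) h1
        exact this (by rw [← shift_shift]; exact hc)
      | LTL.until_ α β =>
        have l1 : (LTL.neg α).length ≤ n := by simp [LTL.length] at hl ⊢; have := length_pos β; omega
        have l2 : (LTL.neg β).length ≤ n := by simp [LTL.length] at hl ⊢; have := length_pos α; omega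
        intro hc
        obtain ⟨d, hb, ha⟩ := hc
        -- refute by induction on d, generalizing i
        induction d generalizing i with
        | zero =>
          rcases h.hneguntil i α β hi with ⟨_, h2⟩ | ⟨h2, _⟩ <;>
          · have := IH (LTL.neg β) l2 i h2
            rw [shift_shift] at hb
            simp only [Nat.add_zero] at hb
            exact this hb
        | succ d IHd =>
          rcases h.hneguntil i α β hi with ⟨h1, _⟩ | ⟨_, h2⟩
          · have := IH (LTL.neg α) l1 i h1
            have hc0 := ha 0 (Nat.succ_pos d)
            rw [shift_shift] at hc0
            simp only [Nat.add_zero] at hc0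
            exact this hc0
          · refine IHd (i+1) h2 ?_ ?_
            · rw [shift_shift] at hb ⊢
              have : i + 1 + d = i + (d+1) := by omega
              rwa [this]
            · intro j hj
              have := ha (j+1) (by omega)
              rw [shift_shift] at this ⊢
              have e : i + 1 + j = i + (j+1) := by omega
              rwa [e]

end Part1
section Part2
open LTL
variable {AP : Type} [DecidableEq AP]
set_option linter.unusedSectionVars false

/-- One of the two possible children of a static rule. -/
def StaticStep (Γ Γ' : Finset (LTL AP)) : Prop :=
  Static1 Γ Γ' ∨ (∃ Δ', Static2 Γ Γ' Δ') ∨ (∃ Δ', Static2 Γ Δ' Γ')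

/-- One step of the branch: static child or TRANSITION child. -/
def StepRel (Γ Δ : Finset (LTL AP)) : Prop :=
  StaticStep Γ Δ ∨ (Poised Γ ∧ Δ = nextLabel Γ)

lemma static_mem_elem {Γ Γ' : Finset (LTL AP)} (h : StaticStep Γ Γ')
    {ψ : LTL AP} (he : Elementary ψ) (hm : ψ ∈ Γ) : ψ ∈ Γ' := by
  rcases h with h | ⟨Δ', h⟩ | ⟨Δ', h⟩
  · cases h with
    | conj α β Δ hn =>
      rcases Finset.mem_insert.mp hm with rfl | hm
      · simp [Elementary] at he
      · exact Finset.mem_insert_of_mem (Finset.mem_insert_of_mem hm)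
    | negneg α Δ hn =>
      rcases Finset.mem_insert.mp hm with rfl | hm
      · simp [Elementary] at he
      · exact Finset.mem_insert_of_mem hm
  · cases h with
    | negconj α β Δ hn =>
      rcases Finset.mem_insert.mp hm with rfl | hm
      · simp [Elementary] at he
      · exact Finset.mem_insert_of_mem hm
    | untl α β Δ hn =>
      rcases Finset.mem_insert.mp hm with rfl | hm
      · simp [Elementary] at he
      · exact Finset.mem_insert_of_mem hm
    | neguntl α β Δ hn =>
      rcases Finset.mem_insert.mp hm with rfl | hm
      · simp [Elementary] at he
      · exact Finset.mem_insert_of_mem (Finset.mem_insert_of_mem hm)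
  · cases h with
    | negconj α β Δ hn =>
      rcases Finset.mem_insert.mp hm with rfl | hm
      · simp [Elementary] at he
      · exact Finset.mem_insert_of_mem hm
    | untl α β Δ hn =>
      rcases Finset.mem_insert.mp hm with rfl | hm
      · simp [Elementary] at he
      · exact Finset.mem_insert_of_mem (Finset.mem_insert_of_mem hm)
    | neguntl α β Δ hn =>
      rcases Finset.mem_insert.mp hm with rfl | hm
      · simp [Elementary] at he
      · exact Finset.mem_insert_of_mem (Finset.mem_insert_of_mem hm)

lemma poised_no_static {Γ Γ' : Finset (LTL AP)} (hp : Poised Γ)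
    (h : StaticStep Γ Γ') : False := by
  have key : ∀ μ : LTL AP, ¬ Elementary μ → μ ∈ Γ → False := by
    intro μ hne hm; exact hne (hp.2.2 μ hm)
  rcases h with h | ⟨Δ', h⟩ | ⟨Δ', h⟩
  · cases h with
    | conj α β Δ hn => exact key _ (by simp [Elementary]) (Finset.mem_insert_self _ _)
    | negneg α Δ hn => exact key _ (by simp [Elementary]) (Finset.mem_insert_self _ _)
  · cases h with
    | negconj α β Δ hn => exact key _ (by simp [Elementary]) (Finset.mem_insert_self _ _)
    | untl α β Δ hn => exact key _ (by simp [Elementary]) (Finset.mem_insert_self _ _)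
    | neguntl α β Δ hn => exact key _ (by simp [Elementary]) (Finset.mem_insert_self _ _)
  · cases h with
    | negconj α β Δ hn => exact key _ (by simp [Elementary]) (Finset.mem_insert_self _ _)
    | untl α β Δ hn => exact key _ (by simp [Elementary]) (Finset.mem_insert_self _ _)
    | neguntl α β Δ hn => exact key _ (by simp [Elementary]) (Finset.mem_insert_self _ _)

lemma static_consume {Γ Γ' : Finset (LTL AP)} (h : StaticStep Γ Γ') {ψ : LTL AP}
    (hm : ψ ∈ Γ) (hn : ψ ∉ Γ') :
    (∃ α β, ψ = LTL.and α β ∧ α ∈ Γ' ∧ β ∈ Γ') ∨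
    (∃ α, ψ = LTL.neg (LTL.neg α) ∧ α ∈ Γ') ∨
    (∃ α β, ψ = LTL.neg (LTL.and α β) ∧ (LTL.neg α ∈ Γ' ∨ LTL.neg β ∈ Γ')) ∨
    (∃ α β, ψ = LTL.until_ α β ∧
      (β ∈ Γ' ∨ (α ∈ Γ' ∧ LTL.next (LTL.until_ α β) ∈ Γ'))) ∨
    (∃ α β, ψ = LTL.neg (LTL.until_ α β) ∧
      ((LTL.neg α ∈ Γ' ∧ LTL.neg β ∈ Γ') ∨
       (LTL.neg β ∈ Γ' ∧ LTL.next (LTL.neg (LTL.until_ α β)) ∈ Γ'))) := by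
  rcases h with h | ⟨Δ', h⟩ | ⟨Δ', h⟩
  · cases h with
    | conj α β Δ hnd =>
      rcases Finset.mem_insert.mp hm with rfl | hm'
      · exact Or.inl ⟨α, β, rfl, by simp [Finset.mem_insert]⟩
      · exact absurd (by simp [Finset.mem_insert, hm']) hn
    | negneg α Δ hnd =>
      rcases Finset.mem_insert.mp hm with rfl | hm'
      · exact Or.inr (Or.inl ⟨α, rfl, by simp [Finset.mem_insert]⟩)
      · exact absurd (by simp [Finset.mem_insert, hm']) hn
  · cases h with
    | negconj α β Δ hnd =>
      rcases Finset.mem_insert.mp hm with rfl | hm'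
      · exact Or.inr (Or.inr (Or.inl ⟨α, β, rfl, Or.inl (by simp [Finset.mem_insert])⟩))
      · exact absurd (by simp [Finset.mem_insert, hm']) hn
    | untl α β Δ hnd =>
      rcases Finset.mem_insert.mp hm with rfl | hm'
      · exact Or.inr (Or.inr (Or.inr (Or.inl ⟨α, β, rfl, Or.inl (by simp [Finset.mem_insert])⟩)))
      · exact absurd (by simp [Finset.mem_insert, hm']) hn
    | neguntl α β Δ hnd =>
      rcases Finset.mem_insert.mp hm with rfl | hm'
      · exact Or.inr (Or.inr (Or.inr (Or.inr ⟨α, β, rfl, Or.inl (by simp [Finset.mem_insert])⟩)))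
      · exact absurd (by simp [Finset.mem_insert, hm']) hn
  · cases h with
    | negconj α β Δ hnd =>
      rcases Finset.mem_insert.mp hm with rfl | hm'
      · exact Or.inr (Or.inr (Or.inl ⟨α, β, rfl, Or.inr (by simp [Finset.mem_insert])⟩))
      · exact absurd (by simp [Finset.mem_insert, hm']) hn
    | untl α β Δ hnd =>
      rcases Finset.mem_insert.mp hm with rfl | hm'
      · exact Or.inr (Or.inr (Or.inr (Or.inl ⟨α, β, rfl,
          Or.inr (by simp [Finset.mem_insert])⟩)))
      · exact absurd (by simp [Finset.mem_insert, hm']) hn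
    | neguntl α β Δ hnd =>
      rcases Finset.mem_insert.mp hm with rfl | hm'
      · exact Or.inr (Or.inr (Or.inr (Or.inr ⟨α, β, rfl,
          Or.inr (by simp [Finset.mem_insert])⟩)))
      · exact absurd (by simp [Finset.mem_insert, hm']) hn

lemma mem_nextLabel_of_next {Γ : Finset (LTL AP)} {α : LTL AP}
    (h : LTL.next α ∈ Γ) : α ∈ nextLabel Γ := by
  apply Finset.mem_biUnion.mpr
  exact ⟨LTL.next α, h, by simp⟩

lemma mem_nextLabel_of_negnext {Γ : Finset (LTL AP)} {α : LTL AP}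
    (h : LTL.neg (LTL.next α) ∈ Γ) : LTL.neg α ∈ nextLabel Γ := by
  apply Finset.mem_biUnion.mpr
  exact ⟨LTL.neg (LTL.next α), h, by simp⟩

end Part2
section Part3
open LTL
variable {AP : Type} [DecidableEq AP]
set_option linter.unusedSectionVars false

/-- The step at `s` is a TRANSITION step. -/
def TransAt (G : ℕ → Finset (LTL AP)) (s : ℕ) : Prop :=
  Poised (G s) ∧ G (s+1) = nextLabel (G s)

open Classical in
/-- Number of transition steps strictly before `s`. -/
noncomputable def tc (G : ℕ → Finset (LTL AP)) : ℕ → ℕ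
  | 0 => 0
  | s+1 => tc G s + if TransAt G s then 1 else 0

variable {G : ℕ → Finset (LTL AP)} {n : ℕ}

lemma tc_succ_of_trans (h : TransAt G s) : tc G (s+1) = tc G s + 1 := by
  simp [tc, h]

lemma tc_succ_of_not_trans (h : ¬ TransAt G s) : tc G (s+1) = tc G s := by
  simp [tc, h]

lemma tc_le_succ (s : ℕ) : tc G s ≤ tc G (s+1) := by
  by_cases h : TransAt G s
  · rw [tc_succ_of_trans h]; omega
  · rw [tc_succ_of_not_trans h]

lemma tc_mono {s r : ℕ} (h : s ≤ r) : tc G s ≤ tc G r := by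
  induction r with
  | zero => rw [Nat.le_zero.mp h]
  | succ r IH =>
    rcases Nat.lt_or_ge s (r+1) with h' | h'
    · exact le_trans (IH (by omega)) (tc_le_succ r)
    · have : s = r + 1 := by omega
      subst this; exact le_refl _

lemma not_trans_of_tc_eq {s s' r : ℕ} (h1 : s ≤ s') (h2 : s' < r)
    (h3 : tc G s = tc G r) : ¬ TransAt G s' := by
  intro ht
  have e1 : tc G s ≤ tc G s' := tc_mono h1
  have e2 : tc G (s'+1) ≤ tc G r := tc_mono (by omega)
  rw [tc_succ_of_trans ht] at e2
  omega

lemma le_of_trans_tc_eq {s r : ℕ} (ht : TransAt G r) (h : tc G s = tc G r) :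
    s ≤ r := by
  by_contra hc
  have : tc G (r+1) ≤ tc G s := tc_mono (by omega)
  rw [tc_succ_of_trans ht] at this
  omega

lemma trans_unique {r1 r2 : ℕ} (h1 : TransAt G r1) (h2 : TransAt G r2)
    (he : tc G r1 = tc G r2) : r1 = r2 := by
  have := le_of_trans_tc_eq h1 he.symm
  have := le_of_trans_tc_eq h2 he
  omega

/-- Elementary formulas persist through static steps within a segment. -/
lemma elem_persist (hstep : ∀ s < n, StepRel (G s) (G (s+1)))
    {ψ : LTL AP} (he : Elementary ψ) :
    ∀ (d s : ℕ), s + d ≤ n → tc G s = tc G (s + d) → ψ ∈ G s → ψ ∈ G (s + d) := by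
  intro d
  induction d with
  | zero => intro s _ _ h; exact h
  | succ d IH =>
    intro s hle htc hm
    have hnt : ¬ TransAt G s := not_trans_of_tc_eq (le_refl s) (by omega) htc
    have hst := hstep s (by omega)
    rcases hst with hst | hst
    · have hm1 : ψ ∈ G (s+1) := static_mem_elem hst he hm
      have htc1 : tc G (s+1) = tc G s := tc_succ_of_not_trans hnt
      have : s + 1 + d = s + (d+1) := by omega
      have := IH (s+1) (by omega) (by rw [htc1, htc, this]) hm1
      rwa [show s + 1 + d = s + (d+1) by omega] at this
    · exact absurd hst hnt

/-- Every segment before the last has a transition position. -/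
lemma trans_exists (hstep : ∀ s < n, StepRel (G s) (G (s+1))) :
    ∀ (d s : ℕ), n = s + d → tc G s < tc G n →
      ∃ r, s ≤ r ∧ r < n ∧ TransAt G r ∧ tc G r = tc G s := by
  intro d
  induction d with
  | zero =>
    intro s h1 h2
    have : n = s := by omega
    subst this; omega
  | succ d IH =>
    intro s h1 h2
    by_cases ht : TransAt G s
    · exact ⟨s, le_refl s, by omega, ht, rfl⟩
    · have htc1 : tc G (s+1) = tc G s := tc_succ_of_not_trans ht
      obtain ⟨r, hr1, hr2, hr3, hr4⟩ := IH (s+1) (by omega) (by omega)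
      exact ⟨r, by omega, hr2, hr3, by omega⟩

lemma trans_exists' (hstep : ∀ s < n, StepRel (G s) (G (s+1)))
    {s : ℕ} (hs : s ≤ n) (h : tc G s < tc G n) :
    ∃ r, s ≤ r ∧ r < n ∧ TransAt G r ∧ tc G r = tc G s :=
  trans_exists hstep (n - s) s (by omega) h

lemma exit {ψ : LTL AP} :
    ∀ (d s : ℕ), ψ ∈ G s → ψ ∉ G (s + d) →
      ∃ s', s ≤ s' ∧ s' < s + d ∧ ψ ∈ G s' ∧ ψ ∉ G (s'+1) := by
  intro d
  induction d with
  | zero => intro s h1 h2; exact absurd h1 h2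
  | succ d IH =>
    intro s h1 h2
    by_cases hm : ψ ∈ G (s+1)
    · obtain ⟨s', hs1, hs2, hs3, hs4⟩ := IH (s+1) hm
        (by rwa [show s + 1 + d = s + (d+1) by omega])
      exact ⟨s', by omega, by omega, hs3, hs4⟩
    · exact ⟨s, le_refl s, by omega, h1, hm⟩

lemma not_elem_of_poised {Γ : Finset (LTL AP)} (hp : Poised Γ) {ψ : LTL AP}
    (hne : ¬ Elementary ψ) : ψ ∉ Γ := fun hm => hne (hp.2.2 ψ hm)

/-- A non-elementary member of a label is consumed by a static step within its
segment. -/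
lemma consume (hstep : ∀ s < n, StepRel (G s) (G (s+1)))
    (hend : G n = ∅ ∨ Poised (G n)) {ψ : LTL AP} (hne : ¬ Elementary ψ)
    {s : ℕ} (hs : s ≤ n) (hm : ψ ∈ G s) :
    ∃ s', s ≤ s' ∧ s' < n ∧ tc G s' = tc G s ∧ tc G (s'+1) = tc G s ∧
      ψ ∈ G s' ∧ ψ ∉ G (s'+1) ∧ StaticStep (G s') (G (s'+1)) := by
  have hle : tc G s ≤ tc G n := tc_mono hs
  -- find r with ψ ∉ G r, tc G r = tc G s, r ≤ n
  have hr : ∃ r, s ≤ r ∧ r ≤ n ∧ tc G r = tc G s ∧ ψ ∉ G r := by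
    rcases Nat.lt_or_ge (tc G s) (tc G n) with hlt | hge
    · obtain ⟨r, h1, h2, h3, h4⟩ := trans_exists' hstep hs hlt
      exact ⟨r, h1, by omega, h4, not_elem_of_poised h3.1 hne⟩
    · refine ⟨n, hs, le_refl n, by omega, ?_⟩
      rcases hend with he | he
      · rw [he]; exact Finset.notMem_empty ψ
      · exact not_elem_of_poised he hne
  obtain ⟨r, hr1, hr2, hr3, hr4⟩ := hr
  obtain ⟨s', h1, h2, h3, h4⟩ := exit (r - s) s hm (by rwa [show s + (r-s) = r by omega])
  have hs'r : s' < r := by omega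
  have htc : tc G s' = tc G s := by
    have a1 : tc G s ≤ tc G s' := tc_mono h1
    have a2 : tc G s' ≤ tc G r := tc_mono (le_of_lt hs'r)
    omega
  have hnt : ¬ TransAt G s' := not_trans_of_tc_eq h1 hs'r hr3.symm
  have htc1 : tc G (s'+1) = tc G s' := tc_succ_of_not_trans hnt
  have hsn : s' < n := by omega
  rcases hstep s' hsn with hst | hst
  · exact ⟨s', h1, hsn, htc, by omega, h3, h4, hst⟩
  · exact absurd hst hnt

end Part3
section Part4
open LTL
variable {AP : Type} [DecidableEq AP]
set_option linter.unusedSectionVars false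
set_option linter.unusedVariables false

/-- Union of the labels of segment `i`. -/
def SegSet (G : ℕ → Finset (LTL AP)) (n i : ℕ) : Set (LTL AP) :=
  {ψ | ∃ s, s ≤ n ∧ tc G s = i ∧ ψ ∈ G s}

variable {G : ℕ → Finset (LTL AP)} {n : ℕ}

lemma seg_le {i : ℕ} {ψ : LTL AP} (h : ψ ∈ SegSet G n i) : i ≤ tc G n := by
  obtain ⟨s, hs, rfl, _⟩ := h
  exact tc_mono hs

lemma seg_mem {s : ℕ} (hs : s ≤ n) {ψ : LTL AP} (h : ψ ∈ G s) :
    ψ ∈ SegSet G n (tc G s) := ⟨s, hs, rfl, h⟩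

/-- Consumption at the `SegSet` level, giving the full case disjunction. -/
lemma seg_consume (hstep : ∀ s < n, StepRel (G s) (G (s+1)))
    (hend : G n = ∅ ∨ Poised (G n)) {ψ : LTL AP} (hne : ¬ Elementary ψ)
    {i : ℕ} (hm : ψ ∈ SegSet G n i) :
    ∃ Γ' : Finset (LTL AP), (∀ χ : LTL AP, χ ∈ Γ' → χ ∈ SegSet G n i) ∧
      ((∃ α β, ψ = LTL.and α β ∧ α ∈ Γ' ∧ β ∈ Γ') ∨
      (∃ α, ψ = LTL.neg (LTL.neg α) ∧ α ∈ Γ') ∨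
      (∃ α β, ψ = LTL.neg (LTL.and α β) ∧ (LTL.neg α ∈ Γ' ∨ LTL.neg β ∈ Γ')) ∨
      (∃ α β, ψ = LTL.until_ α β ∧
        (β ∈ Γ' ∨ (α ∈ Γ' ∧ LTL.next (LTL.until_ α β) ∈ Γ'))) ∨
      (∃ α β, ψ = LTL.neg (LTL.until_ α β) ∧
        ((LTL.neg α ∈ Γ' ∧ LTL.neg β ∈ Γ') ∨
         (LTL.neg β ∈ Γ' ∧ LTL.next (LTL.neg (LTL.until_ α β)) ∈ Γ')))) := by
  obtain ⟨s, hs, rfl, hmem⟩ := hm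
  obtain ⟨s', h1, h2, h3, h4, h5, h6, h7⟩ := consume hstep hend hne hs hmem
  refine ⟨G (s'+1), ?_, static_consume h7 h5 h6⟩
  intro χ hχ
  have : tc G (s'+1) = tc G s := h4
  exact this ▸ seg_mem (by omega) hχ

/-- Elementary members of a non-final segment persist to its transition
position. -/
lemma seg_elem_trans (hstep : ∀ s < n, StepRel (G s) (G (s+1)))
    {ψ : LTL AP} (he : Elementary ψ) {i r : ℕ} (hm : ψ ∈ SegSet G n i)
    (hrn : r ≤ n) (hrt : TransAt G r) (hri : tc G r = i) : ψ ∈ G r := by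
  obtain ⟨s, hs, rfl, hmem⟩ := hm
  have hsr : s ≤ r := le_of_trans_tc_eq hrt hri.symm
  have := elem_persist hstep he (r - s) s (by omega) (by rw [show s + (r-s) = r by omega, hri]) hmem
  rwa [show s + (r-s) = r by omega] at this

/-- Elementary members of the final segment persist to the end of the branch. -/
lemma seg_elem_end (hstep : ∀ s < n, StepRel (G s) (G (s+1)))
    {ψ : LTL AP} (he : Elementary ψ) {i : ℕ} (hm : ψ ∈ SegSet G n i)
    (hi : i = tc G n) : ψ ∈ G n := by
  obtain ⟨s, hs, rfl, hmem⟩ := hm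
  have := elem_persist hstep he (n - s) s (by omega)
    (by rw [show s + (n-s) = n by omega]; omega) hmem
  rwa [show s + (n-s) = n by omega] at this

lemma seg_and (hstep : ∀ s < n, StepRel (G s) (G (s+1)))
    (hend : G n = ∅ ∨ Poised (G n)) {α β : LTL AP} {i : ℕ}
    (hm : LTL.and α β ∈ SegSet G n i) : α ∈ SegSet G n i ∧ β ∈ SegSet G n i := by
  obtain ⟨Γ', hsub, hc⟩ := seg_consume hstep hend (by simp [Elementary]) hm
  rcases hc with ⟨a, b, he, h1, h2⟩ | ⟨a, he, _⟩ | ⟨a, b, he, _⟩ | ⟨a, b, he, _⟩ | ⟨a, b, he, _⟩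
  · injection he with e1 e2; subst e1; subst e2
    exact ⟨hsub _ h1, hsub _ h2⟩
  all_goals (exact absurd he (by simp))

lemma seg_negneg (hstep : ∀ s < n, StepRel (G s) (G (s+1)))
    (hend : G n = ∅ ∨ Poised (G n)) {α : LTL AP} {i : ℕ}
    (hm : LTL.neg (LTL.neg α) ∈ SegSet G n i) : α ∈ SegSet G n i := by
  obtain ⟨Γ', hsub, hc⟩ := seg_consume hstep hend (by simp [Elementary]) hm
  rcases hc with ⟨a, b, he, _⟩ | ⟨a, he, h1⟩ | ⟨a, b, he, _⟩ | ⟨a, b, he, _⟩ | ⟨a, b, he, _⟩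
  · exact absurd he (by simp)
  · injection he with e1; injection e1 with e1; subst e1
    exact hsub _ h1
  all_goals (first
    | exact absurd he (by simp)
    | (injection he with e1; exact absurd e1 (by simp)))

lemma seg_negand (hstep : ∀ s < n, StepRel (G s) (G (s+1)))
    (hend : G n = ∅ ∨ Poised (G n)) {α β : LTL AP} {i : ℕ}
    (hm : LTL.neg (LTL.and α β) ∈ SegSet G n i) :
    LTL.neg α ∈ SegSet G n i ∨ LTL.neg β ∈ SegSet G n i := by
  obtain ⟨Γ', hsub, hc⟩ := seg_consume hstep hend (by simp [Elementary]) hm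
  rcases hc with ⟨a, b, he, _⟩ | ⟨a, he, _⟩ | ⟨a, b, he, h1⟩ | ⟨a, b, he, _⟩ | ⟨a, b, he, _⟩
  · exact absurd he (by simp)
  · injection he with e1; exact absurd e1 (by simp)
  · injection he with e1; injection e1 with e1 e2; subst e1; subst e2
    exact h1.imp (hsub _) (hsub _)
  · exact absurd he (by simp)
  · injection he with e1; exact absurd e1 (by simp)

lemma seg_until (hstep : ∀ s < n, StepRel (G s) (G (s+1)))
    (hend : G n = ∅ ∨ Poised (G n)) {α β : LTL AP} {i : ℕ}
    (hm : LTL.until_ α β ∈ SegSet G n i) :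
    β ∈ SegSet G n i ∨
      (α ∈ SegSet G n i ∧ LTL.next (LTL.until_ α β) ∈ SegSet G n i) := by
  obtain ⟨Γ', hsub, hc⟩ := seg_consume hstep hend (by simp [Elementary]) hm
  rcases hc with ⟨a, b, he, _⟩ | ⟨a, he, _⟩ | ⟨a, b, he, _⟩ | ⟨a, b, he, h1⟩ | ⟨a, b, he, _⟩
  · exact absurd he (by simp)
  · exact absurd he (by simp)
  · exact absurd he (by simp)
  · injection he with e1 e2; subst e1; subst e2
    exact h1.imp (hsub _) (fun ⟨x, y⟩ => ⟨hsub _ x, hsub _ y⟩)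
  · exact absurd he (by simp)

lemma seg_neguntil (hstep : ∀ s < n, StepRel (G s) (G (s+1)))
    (hend : G n = ∅ ∨ Poised (G n)) {α β : LTL AP} {i : ℕ}
    (hm : LTL.neg (LTL.until_ α β) ∈ SegSet G n i) :
    (LTL.neg α ∈ SegSet G n i ∧ LTL.neg β ∈ SegSet G n i) ∨
      (LTL.neg β ∈ SegSet G n i ∧
        LTL.next (LTL.neg (LTL.until_ α β)) ∈ SegSet G n i) := by
  obtain ⟨Γ', hsub, hc⟩ := seg_consume hstep hend (by simp [Elementary]) hm
  rcases hc with ⟨a, b, he, _⟩ | ⟨a, he, _⟩ | ⟨a, b, he, _⟩ | ⟨a, b, he, _⟩ | ⟨a, b, he, h1⟩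
  · exact absurd he (by simp)
  · injection he with e1; exact absurd e1 (by simp)
  · injection he with e1; exact absurd e1 (by simp)
  · exact absurd he (by simp)
  · injection he with e1; injection e1 with e1 e2; subst e1; subst e2
    exact h1.imp (fun ⟨x, y⟩ => ⟨hsub _ x, hsub _ y⟩)
      (fun ⟨x, y⟩ => ⟨hsub _ x, hsub _ y⟩)

/-- Next-step at the segment level, for non-final segments. -/
lemma seg_next (hstep : ∀ s < n, StepRel (G s) (G (s+1)))
    {α : LTL AP} {i : ℕ} (hm : LTL.next α ∈ SegSet G n i) (hi : i < tc G n) :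
    α ∈ SegSet G n (i+1) := by
  obtain ⟨s, hs, rfl, hmem⟩ := hm
  obtain ⟨r, hr1, hr2, hr3, hr4⟩ := trans_exists' hstep hs hi
  have hpr : LTL.next α ∈ G r :=
    seg_elem_trans hstep (by simp [Elementary]) (seg_mem hs hmem) (by omega) hr3 hr4
  have : α ∈ G (r+1) := by rw [hr3.2]; exact mem_nextLabel_of_next hpr
  have htc : tc G (r+1) = tc G s + 1 := by rw [tc_succ_of_trans hr3, hr4]
  exact htc ▸ seg_mem (by omega) this

lemma seg_negnext (hstep : ∀ s < n, StepRel (G s) (G (s+1)))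
    {α : LTL AP} {i : ℕ} (hm : LTL.neg (LTL.next α) ∈ SegSet G n i)
    (hi : i < tc G n) : LTL.neg α ∈ SegSet G n (i+1) := by
  obtain ⟨s, hs, rfl, hmem⟩ := hm
  obtain ⟨r, hr1, hr2, hr3, hr4⟩ := trans_exists' hstep hs hi
  have hpr : LTL.neg (LTL.next α) ∈ G r :=
    seg_elem_trans hstep (by simp [Elementary]) (seg_mem hs hmem) (by omega) hr3 hr4
  have : LTL.neg α ∈ G (r+1) := by rw [hr3.2]; exact mem_nextLabel_of_negnext hpr
  have htc : tc G (r+1) = tc G s + 1 := by rw [tc_succ_of_trans hr3, hr4]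
  exact htc ▸ seg_mem (by omega) this

lemma seg_consistent (hstep : ∀ s < n, StepRel (G s) (G (s+1)))
    (hend : G n = ∅ ∨ Poised (G n)) {p : AP} {i : ℕ}
    (h1 : LTL.atom p ∈ SegSet G n i)
    (h2 : LTL.neg (LTL.atom p) ∈ SegSet G n i) : False := by
  have hle : i ≤ tc G n := seg_le h1
  rcases Nat.lt_or_ge i (tc G n) with hlt | hge
  · obtain ⟨s, hs, rfl, hmem⟩ := h1
    obtain ⟨r, hr1, hr2, hr3, hr4⟩ := trans_exists' hstep hs hlt
    have m1 : LTL.atom p ∈ G r :=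
      seg_elem_trans hstep (by simp [Elementary]) (seg_mem hs hmem) (by omega) hr3 hr4
    have m2 : LTL.neg (LTL.atom p) ∈ G r :=
      seg_elem_trans hstep (by simp [Elementary]) h2 (by omega) hr3 hr4
    exact hr3.1.2.1 (LTL.atom p) ⟨m1, m2⟩
  · have hi : i = tc G n := by omega
    have m1 : LTL.atom p ∈ G n := seg_elem_end hstep (by simp [Elementary]) h1 hi
    have m2 : LTL.neg (LTL.atom p) ∈ G n := seg_elem_end hstep (by simp [Elementary]) h2 hi
    rcases hend with he | he
    · rw [he] at m1; exact Finset.notMem_empty _ m1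
    · exact he.2.1 (LTL.atom p) ⟨m1, m2⟩

end Part4
section Part5
open LTL
variable {AP : Type} [DecidableEq AP]
set_option linter.unusedSectionVars false
set_option linter.unusedVariables false

variable {G : ℕ → Finset (LTL AP)} {n : ℕ}

lemma shift_zero (σ : ℕ → Set AP) : shift σ 0 = σ := by
  funext j; simp [shift]

lemma tc_zero : tc G 0 = 0 := by simp [tc]

lemma empty_case (hstep : ∀ s < n, StepRel (G s) (G (s+1))) {φ : LTL AP}
    (h0 : G 0 = {φ}) (hend : G n = ∅) :
    ∃ (σ : ℕ → Set AP) (N M : ℕ), 1 ≤ M ∧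
      (∀ i, N ≤ i → σ (i + M) = σ i) ∧ Sat σ φ := by
  have hend' : G n = ∅ ∨ Poised (G n) := Or.inl hend
  set D : ℕ → Set (LTL AP) := SegSet G n with hD
  have noelem_last : ∀ ψ : LTL AP, Elementary ψ → ψ ∈ D (tc G n) → False := by
    intro ψ he hm
    have := seg_elem_end hstep he hm rfl
    rw [hend] at this
    exact Finset.notMem_empty _ this
  have hH : Hintikka D := by
    constructor
    · intro i p h1 h2; exact seg_consistent hstep hend' h1 h2
    · intro i α β hm; exact seg_and hstep hend' hm
    · intro i α β hm; exact seg_negand hstep hend' hm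
    · intro i α hm; exact seg_negneg hstep hend' hm
    · intro i α hm
      have hle : i ≤ tc G n := seg_le hm
      rcases Nat.lt_or_ge i (tc G n) with hlt | hge
      · exact seg_next hstep hm hlt
      · exact absurd (show (LTL.next α) ∈ D (tc G n) by
            rwa [show tc G n = i by omega]) (fun h => noelem_last (LTL.next α)
            (by simp [Elementary]) h)
    · intro i α hm
      have hle : i ≤ tc G n := seg_le hm
      rcases Nat.lt_or_ge i (tc G n) with hlt | hge
      · exact seg_negnext hstep hm hlt
      · exact absurd (show LTL.neg (LTL.next α) ∈ D (tc G n) by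
            rwa [show tc G n = i by omega]) (fun h => noelem_last _
            (by simp [Elementary]) h)
    · -- until
      intro i α β hm
      have main : ∀ m i, tc G n + 1 - i ≤ m → LTL.until_ α β ∈ D i →
          ∃ d, β ∈ D (i+d) ∧ ∀ e < d, α ∈ D (i+e) := by
        intro m
        induction m with
        | zero => intro i h1 h2; have := seg_le h2; omega
        | succ m IH =>
          intro i h1 h2
          have hle : i ≤ tc G n := seg_le h2
          rcases seg_until hstep hend' h2 with hb | ⟨ha, hx⟩
          · exact ⟨0, by simpa using hb, by omega⟩
          · rcases Nat.lt_or_ge i (tc G n) with hlt | hge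
            · have hu1 : LTL.until_ α β ∈ D (i+1) := seg_next hstep hx hlt
              obtain ⟨d, hb, has⟩ := IH (i+1) (by omega) hu1
              refine ⟨d+1, by rwa [show i + (d+1) = i+1+d by omega], ?_⟩
              intro e he
              match e with
              | 0 => simpa using ha
              | e+1 =>
                have := has e (by omega)
                rwa [show i + 1 + e = i + (e+1) by omega] at this
            · exact absurd (show LTL.next (LTL.until_ α β) ∈ D (tc G n) by
                  rwa [show tc G n = i by omega]) (fun h => noelem_last _
                  (by simp [Elementary]) h)
      exact main (tc G n + 1 - i) i le_rfl hm
    · -- neguntil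
      intro i α β hm
      rcases seg_neguntil hstep hend' hm with h | ⟨h1, h2⟩
      · exact Or.inl h
      · have hle : i ≤ tc G n := seg_le h2
        rcases Nat.lt_or_ge i (tc G n) with hlt | hge
        · exact Or.inr ⟨h1, seg_next hstep h2 hlt⟩
        · exact absurd (show LTL.next (LTL.neg (LTL.until_ α β)) ∈ D (tc G n) by
              rwa [show tc G n = i by omega]) (fun h => noelem_last _
              (by simp [Elementary]) h)
  refine ⟨hWord D, tc G n + 1, 1, le_refl 1, ?_, ?_⟩
  · intro i hi
    have e1 : hWord D (i+1) = ∅ := by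
      ext p; simp only [hWord, Set.mem_setOf_eq]
      constructor
      · intro hp; have := seg_le hp; omega
      · intro hp; exact absurd hp (Set.notMem_empty p)
    have e2 : hWord D i = ∅ := by
      ext p; simp only [hWord, Set.mem_setOf_eq]
      constructor
      · intro hp; have := seg_le hp; omega
      · intro hp; exact absurd hp (Set.notMem_empty p)
    rw [e1, e2]
  · have hφ : φ ∈ D 0 := by
      have : φ ∈ G 0 := by rw [h0]; exact Finset.mem_singleton_self φ
      have := seg_mem (Nat.zero_le n) this
      rwa [tc_zero] at this
    have := hintikka_sat hH φ 0 hφ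
    rwa [shift_zero] at this

end Part5
section Part6
open LTL
variable {AP : Type} [DecidableEq AP]
set_option linter.unusedSectionVars false
set_option linter.unusedVariables false

lemma mod_succ_eq {M : ℕ} (hM : 0 < M) (a : ℕ) :
    (a + 1) % M = if a % M + 1 = M then 0 else a % M + 1 := by
  rcases Nat.lt_or_ge M 2 with h2 | h2
  · have : M = 1 := by omega
    subst this; simp [Nat.mod_one]
  · have h1 : (a + 1) % M = (a % M + 1 % M) % M := Nat.add_mod a 1 M
    have h1' : 1 % M = 1 := Nat.mod_eq_of_lt (by omega)
    rw [h1', ] at h1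
    have hq : a % M < M := Nat.mod_lt a hM
    by_cases hc : a % M + 1 = M
    · rw [h1, hc, Nat.mod_self]; simp [hc]
    · rw [h1, Nat.mod_eq_of_lt (by omega)]; simp [hc]

/-- Wrapped index function for the lasso. -/
def wIdx (l K i : ℕ) : ℕ := if i < K then i else l + (i - l) % (K - l)

lemma wIdx_lt {l K : ℕ} (hlK : l < K) (i : ℕ) : wIdx l K i < K := by
  unfold wIdx
  split
  · assumption
  · have : (i - l) % (K - l) < K - l := Nat.mod_lt _ (by omega)
    omega

lemma wIdx_id {l K i : ℕ} (hi : i < K) : wIdx l K i = i := by simp [wIdx, hi]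

lemma wIdx_succ {l K : ℕ} (hlK : l < K) (i : ℕ) :
    wIdx l K (i+1) = if wIdx l K i + 1 = K then l else wIdx l K i + 1 := by
  rcases Nat.lt_or_ge (i+1) K with h1 | h1
  · rw [wIdx_id h1, wIdx_id (by omega)]
    simp [show ¬ (i + 1 = K) by omega]
  · rcases Nat.lt_or_ge i K with h2 | h2
    · -- i + 1 = K
      have hiK : i + 1 = K := by omega
      rw [wIdx_id h2]
      simp only [wIdx, show ¬ (i+1 < K) by omega, if_false, hiK, if_pos rfl]
      rw [Nat.mod_self]; simp
    · -- i ≥ K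
      have e1 : wIdx l K i = l + (i - l) % (K - l) := by simp [wIdx, show ¬ (i < K) by omega]
      have e2 : wIdx l K (i+1) = l + (i + 1 - l) % (K - l) := by
        simp [wIdx, show ¬ (i + 1 < K) by omega]
      have e3 : i + 1 - l = (i - l) + 1 := by omega
      rw [e2, e3, mod_succ_eq (by omega)]
      have hq : (i - l) % (K - l) < K - l := Nat.mod_lt _ (by omega)
      by_cases hc : (i - l) % (K - l) + 1 = K - l
      · rw [if_pos hc, e1, if_pos (by omega)]
        omega
      · rw [if_neg hc, e1, if_neg (by omega)]
        omega

lemma wIdx_period {l K : ℕ} (hlK : l < K) {i : ℕ} (hi : l ≤ i) :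
    wIdx l K (i + (K - l)) = wIdx l K i := by
  have hM : 0 < K - l := by omega
  have h1 : ¬ (i + (K - l) < K) := by omega
  rcases Nat.lt_or_ge i K with h2 | h2
  · rw [wIdx_id h2]
    simp only [wIdx, h1, if_false]
    have : i + (K - l) - l = (i - l) + (K - l) := by omega
    rw [this, Nat.add_mod_right, Nat.mod_eq_of_lt (by omega)]
    omega
  · simp only [wIdx, h1, if_false, show ¬ (i < K) by omega]
    have : i + (K - l) - l = (i - l) + (K - l) := by omega
    rw [this, Nat.add_mod_right]

end Part6
section Part7
open LTL
variable {AP : Type} [DecidableEq AP]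
set_option linter.unusedSectionVars false
set_option linter.unusedVariables false
set_option maxHeartbeats 1000000

variable {G : ℕ → Finset (LTL AP)} {n : ℕ}

lemma loop_case (hstep : ∀ s < n, StepRel (G s) (G (s+1))) {φ : LTL AP}
    (h0 : G 0 = {φ}) (hpn : Poised (G n)) {u : ℕ} (hu : u < n)
    (hpu : Poised (G u)) (hsub : ∀ ψ : LTL AP, ψ ∈ G n → ψ ∈ G u)
    (hful : ∀ α β : LTL AP, LTL.next (LTL.until_ α β) ∈ G u →
      ∃ v, u < v ∧ v ≤ n ∧ β ∈ G v) :
    ∃ (σ : ℕ → Set AP) (N M : ℕ), 1 ≤ M ∧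
      (∀ i, N ≤ i → σ (i + M) = σ i) ∧ Sat σ φ := by
  have hend' : G n = ∅ ∨ Poised (G n) := Or.inr hpn
  have htu : TransAt G u := by
    rcases hstep u hu with h | h
    · exact absurd h (fun h => poised_no_static hpu h)
    · exact h
  set l := tc G u with hl
  set K := tc G n with hK
  have hlK : l < K := by
    have h1 : tc G (u+1) = l + 1 := tc_succ_of_trans htu
    have h2 : tc G (u+1) ≤ K := tc_mono (by omega)
    omega
  set B : ℕ → Set (LTL AP) :=
    fun m => SegSet G n m ∪ (if m = l then SegSet G n K else ∅) with hB
  set D : ℕ → Set (LTL AP) := fun i => B (wIdx l K i) with hD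
  have B_cases : ∀ m (ψ : LTL AP), ψ ∈ B m →
      ψ ∈ SegSet G n m ∨ (m = l ∧ ψ ∈ SegSet G n K) := by
    intro m ψ hm
    rcases hm with hm | hm
    · exact Or.inl hm
    · by_cases hml : m = l
      · rw [if_pos hml] at hm; exact Or.inr ⟨hml, hm⟩
      · rw [if_neg hml] at hm; exact absurd hm (Set.notMem_empty ψ)
  have segK_subset_Bl : ∀ ψ : LTL AP, ψ ∈ SegSet G n K → ψ ∈ B l := by
    intro ψ h
    exact Set.mem_union_right _ (by rw [if_pos rfl]; exact h)
  have seg_subset_B : ∀ m (ψ : LTL AP), ψ ∈ SegSet G n m → ψ ∈ B m :=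
    fun m ψ h => Set.mem_union_left _ h
  have elemK : ∀ ψ : LTL AP, Elementary ψ → ψ ∈ SegSet G n K → ψ ∈ G u := by
    intro ψ he hm
    exact hsub _ (seg_elem_end hstep he hm rfl)
  have eleml : ∀ ψ : LTL AP, Elementary ψ → ψ ∈ SegSet G n l → ψ ∈ G u := by
    intro ψ he hm
    exact seg_elem_trans hstep he hm (by omega) htu rfl
  have from_u : ∀ ψ : LTL AP, ψ ∈ nextLabel (G u) → ψ ∈ SegSet G n (l+1) := by
    intro ψ h
    have h1 : ψ ∈ G (u+1) := by rw [htu.2]; exact h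
    have e : tc G (u+1) = l + 1 := tc_succ_of_trans htu
    exact e ▸ seg_mem (by omega) h1
  -- B-level successor for next-formulas
  have nextB : ∀ m, m < K → ∀ ψ : LTL AP, LTL.next ψ ∈ B m →
      ψ ∈ B (if m + 1 = K then l else m + 1) := by
    intro m hmK ψ hm
    have key : ψ ∈ SegSet G n (m+1) ∨ (m = l ∧ ψ ∈ SegSet G n (l+1)) := by
      rcases B_cases m _ hm with h | ⟨hml, h⟩
      · exact Or.inl (seg_next hstep h hmK)
      · exact Or.inr ⟨hml, from_u ψ
          (mem_nextLabel_of_next (elemK _ (by simp [Elementary]) h))⟩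
    by_cases hc : m + 1 = K
    · rw [if_pos hc]
      rcases key with h | ⟨hml, h⟩
      · exact segK_subset_Bl _ (hc ▸ h)
      · subst hml
        exact segK_subset_Bl _ (by rwa [hc] at h)
    · rw [if_neg hc]
      rcases key with h | ⟨hml, h⟩
      · exact seg_subset_B _ _ h
      · subst hml
        exact seg_subset_B _ _ h
  have negnextB : ∀ m, m < K → ∀ ψ : LTL AP, LTL.neg (LTL.next ψ) ∈ B m →
      LTL.neg ψ ∈ B (if m + 1 = K then l else m + 1) := by
    intro m hmK ψ hm
    have key : LTL.neg ψ ∈ SegSet G n (m+1) ∨ (m = l ∧ LTL.neg ψ ∈ SegSet G n (l+1)) := by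
      rcases B_cases m _ hm with h | ⟨hml, h⟩
      · exact Or.inl (seg_negnext hstep h hmK)
      · exact Or.inr ⟨hml, from_u _
          (mem_nextLabel_of_negnext (elemK _ (by simp [Elementary]) h))⟩
    by_cases hc : m + 1 = K
    · rw [if_pos hc]
      rcases key with h | ⟨hml, h⟩
      · exact segK_subset_Bl _ (hc ▸ h)
      · subst hml
        exact segK_subset_Bl _ (by rwa [hc] at h)
    · rw [if_neg hc]
      rcases key with h | ⟨hml, h⟩
      · exact seg_subset_B _ _ h
      · subst hml
        exact seg_subset_B _ _ h
  have hnextD : ∀ i (ψ : LTL AP), LTL.next ψ ∈ D i → ψ ∈ D (i+1) := by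
    intro i ψ hm
    have := nextB (wIdx l K i) (wIdx_lt hlK i) ψ hm
    show ψ ∈ B (wIdx l K (i+1))
    rwa [wIdx_succ hlK i]
  have hnegnextD : ∀ i (ψ : LTL AP), LTL.neg (LTL.next ψ) ∈ D i →
      LTL.neg ψ ∈ D (i+1) := by
    intro i ψ hm
    have := negnextB (wIdx l K i) (wIdx_lt hlK i) ψ hm
    show LTL.neg ψ ∈ B (wIdx l K (i+1))
    rwa [wIdx_succ hlK i]
  have hH : Hintikka D := by
    constructor
    · -- consistent
      intro i p h1 h2
      rcases B_cases _ _ h1 with a1 | ⟨hml1, a1⟩ <;>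
        rcases B_cases _ _ h2 with a2 | ⟨hml2, a2⟩
      · exact seg_consistent hstep hend' a1 a2
      · refine hpu.2.1 (LTL.atom p) ⟨?_, ?_⟩
        · exact eleml _ (by simp [Elementary]) (hml2 ▸ a1)
        · exact elemK _ (by simp [Elementary]) a2
      · refine hpu.2.1 (LTL.atom p) ⟨?_, ?_⟩
        · exact elemK _ (by simp [Elementary]) a1
        · exact eleml _ (by simp [Elementary]) (hml1 ▸ a2)
      · exact seg_consistent hstep hend' a1 a2
    · -- and
      intro i α β hm
      rcases B_cases _ _ hm with h | ⟨hml, h⟩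
      · obtain ⟨h1, h2⟩ := seg_and hstep hend' h
        exact ⟨seg_subset_B _ _ h1, seg_subset_B _ _ h2⟩
      · obtain ⟨h1, h2⟩ := seg_and hstep hend' h
        constructor <;>
        · show _ ∈ B (wIdx l K i)
          rw [hml]
          first
            | exact segK_subset_Bl _ h1
            | exact segK_subset_Bl _ h2
    · -- negand
      intro i α β hm
      rcases B_cases _ _ hm with h | ⟨hml, h⟩
      · exact (seg_negand hstep hend' h).imp (seg_subset_B _ _) (seg_subset_B _ _)
      · refine (seg_negand hstep hend' h).imp ?_ ?_ <;>
        · intro hx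
          show _ ∈ B (wIdx l K i)
          rw [hml]
          exact segK_subset_Bl _ hx
    · -- negneg
      intro i α hm
      rcases B_cases _ _ hm with h | ⟨hml, h⟩
      · exact seg_subset_B _ _ (seg_negneg hstep hend' h)
      · show _ ∈ B (wIdx l K i)
        rw [hml]
        exact segK_subset_Bl _ (seg_negneg hstep hend' h)
    · -- next
      intro i α hm; exact hnextD i α hm
    · -- negnext
      intro i α hm; exact hnegnextD i α hm
    · -- until
      intro i α β hm
      by_contra H
      have C : ∀ d, LTL.until_ α β ∈ D (i+d) ∧ ∀ e < d, α ∈ D (i+e) := by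
        intro d
        induction d with
        | zero => exact ⟨by simpa using hm, by omega⟩
        | succ d IH =>
          obtain ⟨hu', ha'⟩ := IH
          have step : β ∈ D (i+d) ∨ (α ∈ D (i+d) ∧ LTL.until_ α β ∈ D (i+d+1)) := by
            rcases B_cases _ _ hu' with h | ⟨hml, h⟩
            · rcases seg_until hstep hend' h with hb | ⟨ha, hx⟩
              · exact Or.inl (seg_subset_B _ _ hb)
              · exact Or.inr ⟨seg_subset_B _ _ ha,
                  hnextD (i+d) _ (seg_subset_B _ _ hx)⟩
            · rcases seg_until hstep hend' h with hb | ⟨ha, hx⟩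
              · refine Or.inl ?_
                show β ∈ B (wIdx l K (i+d))
                rw [hml]; exact segK_subset_Bl _ hb
              · refine Or.inr ⟨?_, ?_⟩
                · show α ∈ B (wIdx l K (i+d))
                  rw [hml]; exact segK_subset_Bl _ ha
                · refine hnextD (i+d) _ ?_
                  show LTL.next (LTL.until_ α β) ∈ B (wIdx l K (i+d))
                  rw [hml]; exact segK_subset_Bl _ hx
          rcases step with hb | ⟨ha, hU⟩
          · exact absurd ⟨d, hb, fun e he => ha' e he⟩ H
          · refine ⟨by rwa [show i+(d+1) = i+d+1 by omega], ?_⟩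
            intro e he
            rcases Nat.lt_or_ge e d with h' | h'
            · exact ha' e h'
            · have : e = d := by omega
              subst this; exact ha
      have hA : ∀ e, α ∈ D (i+e) := fun e => (C (e+1)).2 e (by omega)
      have hB' : ∀ d, β ∉ D (i+d) := fun d hb => H ⟨d, hb, fun e _ => hA e⟩
      set i' := l + (K - l) * (i + 1) with hi'
      have hgei : i ≤ i' := by
        have := Nat.le_mul_of_pos_left (i+1) (show 0 < K - l by omega)
        omega
      have hgeK : K ≤ i' := by
        have := Nat.le_mul_of_pos_right (K - l) (show 0 < i + 1 by omega)
        omega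
      have hwi' : wIdx l K i' = l := by
        simp only [wIdx, show ¬ (i' < K) by omega, if_false]
        rw [show i' - l = (K - l) * (i + 1) by omega, Nat.mul_mod_right]
        omega
      have hUi' : LTL.until_ α β ∈ B l := by
        have h1 := (C (i' - i)).1
        rw [show i + (i' - i) = i' by omega] at h1
        show LTL.until_ α β ∈ B l
        rwa [show (l : ℕ) = wIdx l K i' from hwi'.symm]
      have hβi' : β ∉ B l := by
        have h1 := hB' (i' - i)
        rw [show i + (i' - i) = i' by omega] at h1
        rwa [show (l : ℕ) = wIdx l K i' from hwi'.symm]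
      have hXu : LTL.next (LTL.until_ α β) ∈ G u := by
        rcases B_cases l _ hUi' with h | ⟨_, h⟩
        · rcases seg_until hstep hend' h with hb | ⟨_, hx⟩
          · exact absurd (seg_subset_B _ _ hb) hβi'
          · exact eleml _ (by simp [Elementary]) hx
        · rcases seg_until hstep hend' h with hb | ⟨_, hx⟩
          · exact absurd (segK_subset_Bl _ hb) hβi'
          · exact elemK _ (by simp [Elementary]) hx
      obtain ⟨v, hv1, hv2, hβv⟩ := hful α β hXu
      have hcv1 : l + 1 ≤ tc G v := by
        have h1 := tc_mono (G := G) (show u+1 ≤ v by omega)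
        rw [tc_succ_of_trans htu] at h1
        omega
      have hcv2 : tc G v ≤ K := tc_mono hv2
      have hβseg : β ∈ SegSet G n (tc G v) := seg_mem hv2 hβv
      rcases Nat.lt_or_ge (tc G v) K with hcK | hcK
      · set e := tc G v - l with he
        have hwe : wIdx l K (i' + e) = l + e := by
          simp only [wIdx, show ¬ (i' + e < K) by omega, if_false]
          rw [show i' + e - l = (K - l) * (i + 1) + e by omega, Nat.mul_add_mod,
            Nat.mod_eq_of_lt (by omega)]
        have hmem : β ∈ D (i' + e) := by
          show β ∈ B (wIdx l K (i' + e))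
          rw [hwe]
          exact seg_subset_B _ _ (by rwa [show l + e = tc G v by omega])
        have h1 := hB' (i' + e - i)
        rw [show i + (i' + e - i) = i' + e by omega] at h1
        exact h1 hmem
      · have hcK' : tc G v = K := by omega
        exact hβi' (segK_subset_Bl _ (hcK' ▸ hβseg))
    · -- neguntil
      intro i α β hm
      rcases B_cases _ _ hm with h | ⟨hml, h⟩
      · rcases seg_neguntil hstep hend' h with ⟨h1, h2⟩ | ⟨h1, h2⟩
        · exact Or.inl ⟨seg_subset_B _ _ h1, seg_subset_B _ _ h2⟩
        · exact Or.inr ⟨seg_subset_B _ _ h1, hnextD i _ (seg_subset_B _ _ h2)⟩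
      · rcases seg_neguntil hstep hend' h with ⟨h1, h2⟩ | ⟨h1, h2⟩
        · refine Or.inl ⟨?_, ?_⟩ <;>
          · show _ ∈ B (wIdx l K i)
            rw [hml]
            first
              | exact segK_subset_Bl _ h1
              | exact segK_subset_Bl _ h2
        · refine Or.inr ⟨?_, ?_⟩
          · show _ ∈ B (wIdx l K i)
            rw [hml]; exact segK_subset_Bl _ h1
          · refine hnextD i _ ?_
            show _ ∈ B (wIdx l K i)
            rw [hml]; exact segK_subset_Bl _ h2
  refine ⟨hWord D, l, K - l, by omega, ?_, ?_⟩
  · intro i hi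
    show hWord D (i + (K - l)) = hWord D i
    have : D (i + (K - l)) = D i := by
      show B (wIdx l K (i + (K - l))) = B (wIdx l K i)
      rw [wIdx_period hlK hi]
    simp only [hWord, this]
  · have hφ : φ ∈ D 0 := by
      show φ ∈ B (wIdx l K 0)
      rw [wIdx_id (by omega)]
      refine seg_subset_B _ _ ?_
      have h1 : φ ∈ G 0 := by rw [h0]; exact Finset.mem_singleton_self φ
      have := seg_mem (Nat.zero_le n) h1
      rwa [tc_zero] at this
    have := hintikka_sat hH φ 0 hφ
    rwa [shift_zero] at this

end Part7
section Part8
open LTL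
variable {AP : Type} [DecidableEq AP]
set_option linter.unusedSectionVars false
set_option linter.unusedVariables false

lemma labelAt_append_left {A B : List (Finset (LTL AP))} {i : ℕ}
    (h : i < A.length) : labelAt (A ++ B) i = labelAt A i :=
  List.getD_append A B ∅ i h

lemma labelAt_append_right {A B : List (Finset (LTL AP))} (k : ℕ) :
    labelAt (A ++ B) (A.length + k) = labelAt B k := by
  unfold labelAt
  rw [List.getD_append_right A B ∅ _ (by omega)]
  congr 1
  omega

lemma labelAt_concat_self {A : List (Finset (LTL AP))} {x : Finset (LTL AP)} :
    labelAt (A ++ [x]) A.length = x := by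
  have := labelAt_append_right (A := A) (B := [x]) 0
  simpa [labelAt] using this

/-- Extraction of a successful branch from a valid tableau tree. -/
lemma extract {anc : List (Finset (LTL AP))} {t : Tab AP} (hv : Valid anc t)
    (hs : t.Successful) :
    ∃ P : List (Finset (LTL AP)), P ≠ [] ∧
      labelAt (anc ++ P) anc.length = t.label ∧
      (∀ s, anc.length ≤ s → s + 1 < (anc ++ P).length →
        StepRel (labelAt (anc ++ P) s) (labelAt (anc ++ P) (s+1))) ∧
      (labelAt (anc ++ P) ((anc ++ P).length - 1) = ∅ ∨
        (Poised (labelAt (anc ++ P) ((anc ++ P).length - 1)) ∧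
          LoopCond (anc ++ P).dropLast
            (labelAt (anc ++ P) ((anc ++ P).length - 1)))) := by
  induction hv with
  | empty anc =>
    refine ⟨[∅], by simp, labelAt_concat_self, ?_, ?_⟩
    · intro s h1 h2
      simp at h2
      omega
    · left
      have : (anc ++ [(∅ : Finset (LTL AP))]).length - 1 = anc.length := by simp
      rw [this, labelAt_concat_self]
  | contra anc Γ α h1 h2 => simp [Tab.Successful] at hs
  | unfin anc Γ => simp [Tab.Successful] at hs
  | static1 anc Γ t h hv IH =>
    have hs' : t.Successful := hs
    obtain ⟨P', hne, hhead, hsteps, hend⟩ := IH hs'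
    refine ⟨Γ :: P', by simp, ?_, ?_, ?_⟩
    · rw [show anc ++ Γ :: P' = (anc ++ [Γ]) ++ P' by simp]
      rw [labelAt_append_left (by simp)]
      exact labelAt_concat_self
    · intro s h1 h2
      rw [show anc ++ Γ :: P' = (anc ++ [Γ]) ++ P' by simp] at *
      rcases Nat.lt_or_ge s (anc.length + 1) with h3 | h3
      · have hse : s = anc.length := by omega
        subst hse
        have e1 : labelAt ((anc ++ [Γ]) ++ P') anc.length = Γ := by
          rw [labelAt_append_left (by simp)]
          exact labelAt_concat_self
        have e2 : labelAt ((anc ++ [Γ]) ++ P') (anc.length+1) = t.label := by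
          have e3 : anc.length + 1 = (anc ++ [Γ]).length := by simp
          rw [e3]
          exact hhead
        rw [e1, e2]
        exact Or.inl (Or.inl h)
      · exact hsteps s (by simpa using h3) (by simpa using h2)
    · rw [show anc ++ Γ :: P' = (anc ++ [Γ]) ++ P' by simp]
      have : (anc ++ Γ :: P').length = ((anc ++ [Γ]) ++ P').length := by simp
      convert hend using 3 <;> simp
  | static2 anc Γ t₁ t₂ h hv₁ hv₂ IH₁ IH₂ =>
    rcases hs with hs' | hs'
    · obtain ⟨P', hne, hhead, hsteps, hend⟩ := IH₁ hs'
      refine ⟨Γ :: P', by simp, ?_, ?_, ?_⟩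
      · rw [show anc ++ Γ :: P' = (anc ++ [Γ]) ++ P' by simp]
        rw [labelAt_append_left (by simp)]
        exact labelAt_concat_self
      · intro s h1 h2
        rw [show anc ++ Γ :: P' = (anc ++ [Γ]) ++ P' by simp] at *
        rcases Nat.lt_or_ge s (anc.length + 1) with h3 | h3
        · have hse : s = anc.length := by omega
          subst hse
          have e1 : labelAt ((anc ++ [Γ]) ++ P') anc.length = Γ := by
            rw [labelAt_append_left (by simp)]
            exact labelAt_concat_self
          have e2 : labelAt ((anc ++ [Γ]) ++ P') (anc.length+1) = t₁.label := by
            have e3 : anc.length + 1 = (anc ++ [Γ]).length := by simp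
            rw [e3]
            exact hhead
          rw [e1, e2]
          exact Or.inl (Or.inr (Or.inl ⟨t₂.label, h⟩))
        · exact hsteps s (by simpa using h3) (by simpa using h2)
      · rw [show anc ++ Γ :: P' = (anc ++ [Γ]) ++ P' by simp]
        convert hend using 3 <;> simp
    · obtain ⟨P', hne, hhead, hsteps, hend⟩ := IH₂ hs'
      refine ⟨Γ :: P', by simp, ?_, ?_, ?_⟩
      · rw [show anc ++ Γ :: P' = (anc ++ [Γ]) ++ P' by simp]
        rw [labelAt_append_left (by simp)]
        exact labelAt_concat_self
      · intro s h1 h2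
        rw [show anc ++ Γ :: P' = (anc ++ [Γ]) ++ P' by simp] at *
        rcases Nat.lt_or_ge s (anc.length + 1) with h3 | h3
        · have hse : s = anc.length := by omega
          subst hse
          have e1 : labelAt ((anc ++ [Γ]) ++ P') anc.length = Γ := by
            rw [labelAt_append_left (by simp)]
            exact labelAt_concat_self
          have e2 : labelAt ((anc ++ [Γ]) ++ P') (anc.length+1) = t₂.label := by
            have e3 : anc.length + 1 = (anc ++ [Γ]).length := by simp
            rw [e3]
            exact hhead
          rw [e1, e2]
          exact Or.inl (Or.inr (Or.inr ⟨t₁.label, h⟩))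
        · exact hsteps s (by simpa using h3) (by simpa using h2)
      · rw [show anc ++ Γ :: P' = (anc ++ [Γ]) ++ P' by simp]
        convert hend using 3 <;> simp
  | loop anc Γ hp h =>
    refine ⟨[Γ], by simp, labelAt_concat_self, ?_, ?_⟩
    · intro s h1 h2
      simp at h2
      omega
    · right
      have e0 : (anc ++ [Γ]).length - 1 = anc.length := by simp
      rw [e0, labelAt_concat_self]
      rw [List.dropLast_concat]
      exact ⟨hp, h⟩
  | prune anc Γ hp h => simp [Tab.Successful] at hs
  | prune0 anc Γ hp h => simp [Tab.Successful] at hs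
  | transition anc Γ t hp hl hpr hp0 h hv IH =>
    have hs' : t.Successful := hs
    obtain ⟨P', hne, hhead, hsteps, hend⟩ := IH hs'
    refine ⟨Γ :: P', by simp, ?_, ?_, ?_⟩
    · rw [show anc ++ Γ :: P' = (anc ++ [Γ]) ++ P' by simp]
      rw [labelAt_append_left (by simp)]
      exact labelAt_concat_self
    · intro s h1 h2
      rw [show anc ++ Γ :: P' = (anc ++ [Γ]) ++ P' by simp] at *
      rcases Nat.lt_or_ge s (anc.length + 1) with h3 | h3
      · have hse : s = anc.length := by omega
        subst hse
        have e1 : labelAt ((anc ++ [Γ]) ++ P') anc.length = Γ := by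
          rw [labelAt_append_left (by simp)]
          exact labelAt_concat_self
        have e2 : labelAt ((anc ++ [Γ]) ++ P') (anc.length+1) = t.label := by
          have e3 : anc.length + 1 = (anc ++ [Γ]).length := by simp
          rw [e3]
          exact hhead
        rw [e1, e2]
        exact Or.inr ⟨hp, h⟩
      · exact hsteps s (by simpa using h3) (by simpa using h2)
    · rw [show anc ++ Γ :: P' = (anc ++ [Γ]) ++ P' by simp]
      convert hend using 3 <;> simp

end Part8
section Part9
open LTL
variable {AP : Type} [DecidableEq AP]
set_option linter.unusedSectionVars false
set_option linter.unusedVariables false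

lemma labelAt_last {P : List (Finset (LTL AP))} (hne : P ≠ []) :
    labelAt P (P.length - 1) = P.getLast hne := by
  unfold labelAt
  rw [List.getD_eq_getElem _ _ (by
    have : 0 < P.length := List.length_pos_iff.mpr hne
    omega)]
  rw [List.getLast_eq_getElem]

lemma labelAt_dropLast {P : List (Finset (LTL AP))} (hne : P ≠ []) {u : ℕ}
    (hu : u < P.length - 1) : labelAt P.dropLast u = labelAt P u := by
  conv_rhs => rw [← List.dropLast_append_getLast hne]
  rw [labelAt_append_left (by rw [List.length_dropLast]; omega)]

end Part9

open LTL in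
theorem tableau_soundness_lasso' {AP : Type} [DecidableEq AP]
    (φ : LTL AP) (T : Tab AP) (hT : IsTableauFor φ T) (hs : T.Successful) :
    ∃ (σ : ℕ → Set AP) (N M : ℕ), 1 ≤ M ∧
      (∀ i, N ≤ i → σ (i + M) = σ i) ∧ Sat σ φ := by
  obtain ⟨hlab, hv⟩ := hT
  obtain ⟨P, hne, hhead, hsteps, hend⟩ := extract hv hs
  simp only [List.nil_append, List.length_nil] at hhead hsteps hend
  set G : ℕ → Finset (LTL AP) := labelAt P with hG
  set n : ℕ := P.length - 1 with hn
  have hlen : 0 < P.length := List.length_pos_iff.mpr hne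
  have h0 : G 0 = {φ} := by rw [hhead, hlab]
  have hstep : ∀ s < n, StepRel (G s) (G (s+1)) := by
    intro s hsn
    exact hsteps s (by omega) (by omega)
  rcases hend with hB | ⟨hpn, hloop⟩
  · exact empty_case hstep h0 hB
  · obtain ⟨u, hu, hpu, hsub, hful⟩ := hloop
    rw [List.length_dropLast] at hu
    have hu' : u < n := by omega
    have hdl : labelAt P.dropLast u = G u := labelAt_dropLast hne (by omega)
    have hfull_list : P.dropLast ++ [labelAt P (P.length - 1)] = P := by
      rw [labelAt_last hne]
      exact List.dropLast_append_getLast hne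
    refine loop_case hstep h0 hpn hu' (by rwa [hdl] at hpu) ?_ ?_
    · intro ψ hψ
      have := hsub hψ
      rwa [hdl] at this
    · intro α β hαβ
      obtain ⟨w, hw1, hw2, hw3⟩ := hful α β (by rwa [hdl])
      rw [List.length_dropLast] at hw2
      rw [hfull_list] at hw3
      exact ⟨w, hw1, by omega, hw3⟩

open LTL in
/-- Lasso-model soundness: if an LTL formula `φ` has a
successful tableau then `φ` has an ultimately periodic model. -/
theorem tableau_soundness_lasso {AP : Type} [DecidableEq AP] [Countable AP]
    (φ : LTL AP) (T : Tab AP) (hT : IsTableauFor φ T) (hs : T.Successful) :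
    ∃ (σ : ℕ → Set AP) (N M : ℕ), 1 ≤ M ∧
      (∀ i, N ≤ i → σ (i + M) = σ i) ∧ Sat σ φ :=
  tableau_soundness_lasso' φ T hT hs
end

section
/- Termination of the tableau construction: for every LTL formula φ there is no infinite branch in any tableau for φ, provided that a node is made a leaf (ticked or crossed) whenever the EMPTY, CONTRADICTION, LOOP, PRUNE or PRUNE₀ rule applies to it; equivalently, every branch built according to the tableau rules for φ with these rules applied whenever applicable is finite, so any tableau-building procedure for φ terminates. -/
namespace TermAux

open LTL

variable {AP : Type} [DecidableEq AP]

/-- A measure strictly decreasing under static rules. -/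
def mu : LTL AP → ℕ
  | .atom _ => 1
  | .neg α => mu α + 1
  | .and α β => mu α + mu β + 1
  | .next _ => 1
  | .until_ α β => mu α + mu β + 2

lemma mu_pos (ψ : LTL AP) : 0 < mu ψ := by
  cases ψ <;> simp [mu]

def weight (Γ : Finset (LTL AP)) : ℕ := ∑ ψ ∈ Γ, mu ψ

lemma weight_insert_le (a : LTL AP) (s : Finset (LTL AP)) :
    weight (insert a s) ≤ mu a + weight s := by
  by_cases h : a ∈ s
  · rw [Finset.insert_eq_self.2 h]; omega
  · exact le_of_eq (Finset.sum_insert h)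

lemma static1_weight {Γ Δ : Finset (LTL AP)} (h : Static1 Γ Δ) :
    weight Δ < weight Γ := by
  cases h with
  | conj α β Δ h =>
      have h1 : weight (insert (LTL.and α β) Δ) = mu (LTL.and α β) + weight Δ :=
        Finset.sum_insert h
      have h2 : weight (insert α (insert β Δ)) ≤ mu α + (mu β + weight Δ) :=
        le_trans (weight_insert_le _ _) (by

          exact Nat.add_le_add_left (weight_insert_le _ _) _)
      rw [h1]; simp only [mu] at *; omega
  | negneg α Δ h =>
      have h1 : weight (insert (LTL.neg (LTL.neg α)) Δ)
          = mu (LTL.neg (LTL.neg α)) + weight Δ := Finset.sum_insert h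
      have h2 := weight_insert_le α Δ
      rw [h1]; simp only [mu] at *; omega

lemma static2_weight {Γ Δ₁ Δ₂ : Finset (LTL AP)} (h : Static2 Γ Δ₁ Δ₂) :
    weight Δ₁ < weight Γ ∧ weight Δ₂ < weight Γ := by
  cases h with
  | negconj α β Δ h =>
      have h1 : weight (insert (LTL.neg (LTL.and α β)) Δ)
          = mu (LTL.neg (LTL.and α β)) + weight Δ := Finset.sum_insert h
      have h2 := weight_insert_le (LTL.neg α) Δ
      have h3 := weight_insert_le (LTL.neg β) Δ
      rw [h1]; simp only [mu] at *
      exact ⟨by omega, by omega⟩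
  | untl α β Δ h =>
      have h1 : weight (insert (LTL.until_ α β) Δ)
          = mu (LTL.until_ α β) + weight Δ := Finset.sum_insert h
      have h2 := weight_insert_le β Δ
      have h3 : weight (insert α (insert (LTL.next (LTL.until_ α β)) Δ))
          ≤ mu α + (mu (LTL.next (LTL.until_ α β)) + weight Δ) :=
        le_trans (weight_insert_le _ _)
          (Nat.add_le_add_left (weight_insert_le _ _) _)
      have hb := mu_pos β
      rw [h1]; simp only [mu] at *
      exact ⟨by omega, by omega⟩
  | neguntl α β Δ h =>
      have h1 : weight (insert (LTL.neg (LTL.until_ α β)) Δ)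
          = mu (LTL.neg (LTL.until_ α β)) + weight Δ := Finset.sum_insert h
      have h2 : weight (insert (LTL.neg α) (insert (LTL.neg β) Δ))
          ≤ mu (LTL.neg α) + (mu (LTL.neg β) + weight Δ) :=
        le_trans (weight_insert_le _ _)
          (Nat.add_le_add_left (weight_insert_le _ _) _)
      have h3 : weight (insert (LTL.neg β)
            (insert (LTL.next (LTL.neg (LTL.until_ α β))) Δ))
          ≤ mu (LTL.neg β) + (mu (LTL.next (LTL.neg (LTL.until_ α β))) + weight Δ) :=
        le_trans (weight_insert_le _ _)
          (Nat.add_le_add_left (weight_insert_le _ _) _)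
      have ha := mu_pos α
      rw [h1]; simp only [mu] at *
      exact ⟨by omega, by omega⟩

/-! ### Subformulas and a finite universe of labels -/

lemma mem_subf_self (ψ : LTL AP) : ψ ∈ ψ.subf := by
  cases ψ <;> simp [LTL.subf]

lemma subf_trans {χ ψ φ : LTL AP} (h1 : χ ∈ ψ.subf) (h2 : ψ ∈ φ.subf) :
    χ ∈ φ.subf := by
  induction φ with
  | atom p =>
      simp only [LTL.subf, Finset.mem_singleton] at h2
      subst h2; exact h1
  | neg α ih =>
      simp only [LTL.subf, Finset.mem_insert] at h2 ⊢
      rcases h2 with rfl | h2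
      · simpa [LTL.subf] using h1
      · exact Or.inr (ih h2)
  | and α β ih1 ih2 =>
      simp only [LTL.subf, Finset.mem_insert, Finset.mem_union] at h2 ⊢
      rcases h2 with rfl | h2 | h2
      · simpa [LTL.subf] using h1
      · exact Or.inr (Or.inl (ih1 h2))
      · exact Or.inr (Or.inr (ih2 h2))
  | next α ih =>
      simp only [LTL.subf, Finset.mem_insert] at h2 ⊢
      rcases h2 with rfl | h2
      · simpa [LTL.subf] using h1
      · exact Or.inr (ih h2)
  | until_ α β ih1 ih2 =>
      simp only [LTL.subf, Finset.mem_insert, Finset.mem_union] at h2 ⊢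
      rcases h2 with rfl | h2 | h2
      · simpa [LTL.subf] using h1
      · exact Or.inr (Or.inl (ih1 h2))
      · exact Or.inr (Or.inr (ih2 h2))

/-- A finite set of formulas containing every label of any branch for `φ`. -/
def bigC (φ : LTL AP) : Finset (LTL AP) :=
  φ.subf ∪ φ.subf.image LTL.neg ∪ φ.subf.image LTL.next ∪
    φ.subf.image (fun ψ => LTL.neg (LTL.next ψ)) ∪
    φ.subf.image (fun ψ => LTL.next (LTL.neg ψ))

lemma subf_mem_bigC {φ ψ : LTL AP} (h : ψ ∈ φ.subf) : ψ ∈ bigC φ := by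
  simp only [bigC, Finset.mem_union]; exact Or.inl (Or.inl (Or.inl (Or.inl h)))

lemma neg_mem_bigC {φ ψ : LTL AP} (h : ψ ∈ φ.subf) : LTL.neg ψ ∈ bigC φ := by
  simp only [bigC, Finset.mem_union, Finset.mem_image]
  exact Or.inl (Or.inl (Or.inl (Or.inr ⟨ψ, h, rfl⟩)))

lemma next_mem_bigC {φ ψ : LTL AP} (h : ψ ∈ φ.subf) : LTL.next ψ ∈ bigC φ := by
  simp only [bigC, Finset.mem_union, Finset.mem_image]
  exact Or.inl (Or.inl (Or.inr ⟨ψ, h, rfl⟩))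

lemma negnext_mem_bigC {φ ψ : LTL AP} (h : ψ ∈ φ.subf) :
    LTL.neg (LTL.next ψ) ∈ bigC φ := by
  simp only [bigC, Finset.mem_union, Finset.mem_image]
  exact Or.inl (Or.inr ⟨ψ, h, rfl⟩)

lemma nextneg_mem_bigC {φ ψ : LTL AP} (h : ψ ∈ φ.subf) :
    LTL.next (LTL.neg ψ) ∈ bigC φ := by
  simp only [bigC, Finset.mem_union, Finset.mem_image]
  exact Or.inr ⟨ψ, h, rfl⟩

lemma mem_bigC_elim {φ ψ : LTL AP} (h : ψ ∈ bigC φ) :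
    ψ ∈ φ.subf ∨ (∃ γ ∈ φ.subf, ψ = LTL.neg γ) ∨
      (∃ γ ∈ φ.subf, ψ = LTL.next γ) ∨
      (∃ γ ∈ φ.subf, ψ = LTL.neg (LTL.next γ)) ∨
      (∃ γ ∈ φ.subf, ψ = LTL.next (LTL.neg γ)) := by
  simp only [bigC, Finset.mem_union, Finset.mem_image] at h
  rcases h with ((((h | ⟨γ, hγ, rfl⟩) | ⟨γ, hγ, rfl⟩) | ⟨γ, hγ, rfl⟩) | ⟨γ, hγ, rfl⟩)
  · exact Or.inl h
  · exact Or.inr (Or.inl ⟨γ, hγ, rfl⟩)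
  · exact Or.inr (Or.inr (Or.inl ⟨γ, hγ, rfl⟩))
  · exact Or.inr (Or.inr (Or.inr (Or.inl ⟨γ, hγ, rfl⟩)))
  · exact Or.inr (Or.inr (Or.inr (Or.inr ⟨γ, hγ, rfl⟩)))

lemma c_and {φ α β : LTL AP} (h : LTL.and α β ∈ bigC φ) :
    α ∈ bigC φ ∧ β ∈ bigC φ := by
  rcases mem_bigC_elim h with h | ⟨γ, hγ, he⟩ | ⟨γ, hγ, he⟩ | ⟨γ, hγ, he⟩ | ⟨γ, hγ, he⟩
  · refine ⟨subf_mem_bigC (subf_trans ?_ h), subf_mem_bigC (subf_trans ?_ h)⟩ <;>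
      simp [LTL.subf, mem_subf_self]
  all_goals simp at he

lemma c_negand {φ α β : LTL AP} (h : LTL.neg (LTL.and α β) ∈ bigC φ) :
    LTL.neg α ∈ bigC φ ∧ LTL.neg β ∈ bigC φ := by
  have hand : LTL.and α β ∈ φ.subf := by
    rcases mem_bigC_elim h with h | ⟨γ, hγ, he⟩ | ⟨γ, hγ, he⟩ | ⟨γ, hγ, he⟩ | ⟨γ, hγ, he⟩
    · exact subf_trans (by simp [LTL.subf, mem_subf_self]) h
    · obtain rfl : γ = LTL.and α β := by simpa [eq_comm] using he
      exact hγ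
    all_goals simp_all
  constructor <;> apply neg_mem_bigC <;>
    exact subf_trans (by simp [LTL.subf, mem_subf_self]) hand

lemma c_negneg {φ α : LTL AP} (h : LTL.neg (LTL.neg α) ∈ bigC φ) :
    α ∈ bigC φ := by
  rcases mem_bigC_elim h with h | ⟨γ, hγ, he⟩ | ⟨γ, hγ, he⟩ | ⟨γ, hγ, he⟩ | ⟨γ, hγ, he⟩
  · exact subf_mem_bigC (subf_trans (by simp [LTL.subf, mem_subf_self]) h)
  · obtain rfl : γ = LTL.neg α := by simpa [eq_comm] using he
    exact subf_mem_bigC (subf_trans (by simp [LTL.subf, mem_subf_self]) hγ)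
  all_goals simp_all

lemma c_until {φ α β : LTL AP} (h : LTL.until_ α β ∈ bigC φ) :
    α ∈ bigC φ ∧ β ∈ bigC φ ∧ LTL.next (LTL.until_ α β) ∈ bigC φ := by
  have hu : LTL.until_ α β ∈ φ.subf := by
    rcases mem_bigC_elim h with h | ⟨γ, hγ, he⟩ | ⟨γ, hγ, he⟩ | ⟨γ, hγ, he⟩ | ⟨γ, hγ, he⟩
    · exact h
    all_goals simp_all
  exact ⟨subf_mem_bigC (subf_trans (by simp [LTL.subf, mem_subf_self]) hu),
    subf_mem_bigC (subf_trans (by simp [LTL.subf, mem_subf_self]) hu),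
    next_mem_bigC hu⟩

lemma c_neguntil {φ α β : LTL AP} (h : LTL.neg (LTL.until_ α β) ∈ bigC φ) :
    LTL.neg α ∈ bigC φ ∧ LTL.neg β ∈ bigC φ ∧
      LTL.next (LTL.neg (LTL.until_ α β)) ∈ bigC φ := by
  have hu : LTL.until_ α β ∈ φ.subf := by
    rcases mem_bigC_elim h with h | ⟨γ, hγ, he⟩ | ⟨γ, hγ, he⟩ | ⟨γ, hγ, he⟩ | ⟨γ, hγ, he⟩
    · exact subf_trans (by simp [LTL.subf, mem_subf_self]) h
    · obtain rfl : γ = LTL.until_ α β := by simpa [eq_comm] using he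
      exact hγ
    all_goals simp_all
  refine ⟨?_, ?_, nextneg_mem_bigC hu⟩ <;> apply neg_mem_bigC <;>
    exact subf_trans (by simp [LTL.subf, mem_subf_self]) hu

lemma c_next {φ α : LTL AP} (h : LTL.next α ∈ bigC φ) : α ∈ bigC φ := by
  rcases mem_bigC_elim h with h | ⟨γ, hγ, he⟩ | ⟨γ, hγ, he⟩ | ⟨γ, hγ, he⟩ | ⟨γ, hγ, he⟩
  · exact subf_mem_bigC (subf_trans (by simp [LTL.subf, mem_subf_self]) h)
  · simp_all
  · obtain rfl : α = γ := by simpa using he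
    exact subf_mem_bigC hγ
  · simp_all
  · obtain rfl : α = LTL.neg γ := by simpa using he
    exact neg_mem_bigC hγ

lemma c_negnext {φ α : LTL AP} (h : LTL.neg (LTL.next α) ∈ bigC φ) :
    LTL.neg α ∈ bigC φ := by
  rcases mem_bigC_elim h with h | ⟨γ, hγ, he⟩ | ⟨γ, hγ, he⟩ | ⟨γ, hγ, he⟩ | ⟨γ, hγ, he⟩
  · exact neg_mem_bigC (subf_trans (ψ := LTL.neg (LTL.next α))
      (by simp [LTL.subf, mem_subf_self]) h)
  · obtain rfl : γ = LTL.next α := by simpa [eq_comm] using he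
    exact neg_mem_bigC (subf_trans (ψ := LTL.next α)
      (by simp [LTL.subf, mem_subf_self]) hγ)
  · simp_all
  · obtain rfl : α = γ := by simpa using he
    exact neg_mem_bigC hγ
  · simp_all

lemma nextLabel_subset {φ : LTL AP} {Γ : Finset (LTL AP)} (hΓ : Γ ⊆ bigC φ) :
    nextLabel Γ ⊆ bigC φ := by
  intro ψ hψ
  rw [nextLabel, Finset.mem_biUnion] at hψ
  obtain ⟨χ, hχ, hm⟩ := hψ
  cases χ with
  | atom p => simp at hm
  | and α β => simp at hm
  | until_ α β => simp at hm
  | next α =>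
      simp only [Finset.mem_singleton] at hm
      subst hm; exact c_next (hΓ hχ)
  | neg χ' =>
      cases χ' with
      | atom p => simp at hm
      | and α β => simp at hm
      | until_ α β => simp at hm
      | neg α => simp at hm
      | next α =>
          simp only [Finset.mem_singleton] at hm
          subst hm; exact c_negnext (hΓ hχ)

lemma step_subset {φ : LTL AP} {Γ Δ : Finset (LTL AP)} (hΓ : Γ ⊆ bigC φ)
    (h : Static1 Γ Δ ∨ (∃ Δ', Static2 Γ Δ Δ') ∨ (∃ Δ', Static2 Γ Δ' Δ) ∨
      (Poised Γ ∧ Δ = nextLabel Γ)) :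
    Δ ⊆ bigC φ := by
  rcases h with h | ⟨Δ', h⟩ | ⟨Δ', h⟩ | ⟨_, rfl⟩
  · cases h with
    | conj α β Δ₀ _ =>
        have hm := hΓ (Finset.mem_insert_self _ _)
        have hs : Δ₀ ⊆ bigC φ :=
          fun x hx => hΓ (Finset.mem_insert_of_mem hx)
        exact Finset.insert_subset (c_and hm).1
          (Finset.insert_subset (c_and hm).2 hs)
    | negneg α Δ₀ _ =>
        have hm := hΓ (Finset.mem_insert_self _ _)
        exact Finset.insert_subset (c_negneg hm)
          (fun x hx => hΓ (Finset.mem_insert_of_mem hx))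
  · cases h with
    | negconj α β Δ₀ _ =>
        have hm := hΓ (Finset.mem_insert_self _ _)
        exact Finset.insert_subset (c_negand hm).1
          (fun x hx => hΓ (Finset.mem_insert_of_mem hx))
    | untl α β Δ₀ _ =>
        have hm := hΓ (Finset.mem_insert_self _ _)
        exact Finset.insert_subset (c_until hm).2.1
          (fun x hx => hΓ (Finset.mem_insert_of_mem hx))
    | neguntl α β Δ₀ _ =>
        have hm := hΓ (Finset.mem_insert_self _ _)
        exact Finset.insert_subset (c_neguntil hm).1
          (Finset.insert_subset (c_neguntil hm).2.1
            (fun x hx => hΓ (Finset.mem_insert_of_mem hx)))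
  · cases h with
    | negconj α β Δ₀ _ =>
        have hm := hΓ (Finset.mem_insert_self _ _)
        exact Finset.insert_subset (c_negand hm).2
          (fun x hx => hΓ (Finset.mem_insert_of_mem hx))
    | untl α β Δ₀ _ =>
        have hm := hΓ (Finset.mem_insert_self _ _)
        exact Finset.insert_subset (c_until hm).1
          (Finset.insert_subset (c_until hm).2.2
            (fun x hx => hΓ (Finset.mem_insert_of_mem hx)))
    | neguntl α β Δ₀ _ =>
        have hm := hΓ (Finset.mem_insert_self _ _)
        exact Finset.insert_subset (c_neguntil hm).2.1
          (Finset.insert_subset (c_neguntil hm).2.2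
            (fun x hx => hΓ (Finset.mem_insert_of_mem hx)))
  · exact nextLabel_subset hΓ

/-! ### labelAt lemmas -/

lemma labelAt_ofFn (f : ℕ → Finset (LTL AP)) {m s : ℕ} (hs : s < m) :
    labelAt (List.ofFn fun i : Fin m => f i) s = f s := by
  rw [labelAt, List.getD_eq_getElem _ _ (by simpa using hs)]
  simp

lemma labelAt_ofFn_append (f : ℕ → Finset (LTL AP)) {m s : ℕ} (hs : s ≤ m)
    (Γ : Finset (LTL AP)) (hΓ : f m = Γ) :
    labelAt ((List.ofFn fun i : Fin m => f i) ++ [Γ]) s = f s := by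
  rcases lt_or_eq_of_le hs with hs | rfl
  · rw [labelAt, List.getD_eq_getElem _ _ (by simp; omega)]
    rw [List.getElem_append_left (by simpa using hs)]
    simp
  · rw [labelAt, List.getD_eq_getElem _ _ (by simp)]
    rw [List.getElem_append_right (by simp)]
    simp [hΓ]

/-! ### extracting a strictly monotone sequence from an infinite set -/

lemma exists_strictMono_in {s : Set ℕ} (hs : s.Infinite) :
    ∃ w : ℕ → ℕ, StrictMono w ∧ ∀ i, w i ∈ s := by
  have hgt : ∀ a : ℕ, ∃ b ∈ s, a < b := fun a => hs.exists_gt a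
  choose g hg1 hg2 using hgt
  refine ⟨fun i => Nat.rec (g 0) (fun _ p => g p) i, ?_, ?_⟩
  · apply strictMono_nat_of_lt_succ
    intro n; exact hg2 _
  · intro i; cases i with
    | zero => exact hg1 0
    | succ i => exact hg1 _

end TermAux

open LTL in
/-- Termination: there is no infinite branch built according to
the tableau rules for `φ`, where a node is made a leaf (ticked or crossed)
whenever the EMPTY, CONTRADICTION, LOOP, PRUNE or PRUNE₀ rule applies to it:
no infinite sequence of labels starting at `{φ}` can have each label obtained
from the previous one (given its ancestor history) by a branch-extension
step. -/
theorem tableau_termination {AP : Type} [DecidableEq AP] [Countable AP]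
    (φ : LTL AP) (f : ℕ → Finset (LTL AP)) (h0 : f 0 = {φ}) :
    ¬ ∀ n : ℕ, BranchStep (List.ofFn fun i : Fin n => f i) (f n) (f (n + 1)) := by
  intro h
  classical
  -- every label is contained in the finite universe `bigC φ`
  have hC : ∀ n, f n ⊆ TermAux.bigC φ := by
    intro n; induction n with
    | zero =>
        rw [h0]
        intro ψ hψ
        rw [Finset.mem_singleton] at hψ; subst hψ
        exact TermAux.subf_mem_bigC (TermAux.mem_subf_self _)
    | succ n ih => exact TermAux.step_subset ih (h n).2
  -- there are arbitrarily late poised labels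
  have hP : ∀ N : ℕ, ∃ n, N ≤ n ∧ Poised (f n) := by
    intro N
    by_contra hc
    push_neg at hc
    have hdec : ∀ m, N ≤ m →
        TermAux.weight (f (m + 1)) < TermAux.weight (f m) := by
      intro m hm
      rcases (h m).2 with h1 | ⟨Δ', h2⟩ | ⟨Δ', h2⟩ | ⟨hp, _⟩
      · exact TermAux.static1_weight h1
      · exact (TermAux.static2_weight h2).1
      · exact (TermAux.static2_weight h2).2
      · exact absurd hp (hc m hm)
    have key : ∀ k, TermAux.weight (f (N + k)) + k ≤ TermAux.weight (f N) := by
      intro k; induction k with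
      | zero => simp
      | succ k ih =>
          have h1 := hdec (N + k) (Nat.le_add_right _ _)
          have e : N + (k + 1) = (N + k) + 1 := rfl
          rw [e]; omega
    have := key (TermAux.weight (f N) + 1)
    omega
  -- the set of poised indices is infinite
  have hinf : {n : ℕ | Poised (f n)}.Infinite := by
    apply Set.infinite_of_not_bddAbove
    rintro ⟨b, hb⟩
    obtain ⟨n, hn, hp⟩ := hP (b + 1)
    have := hb hp
    omega
  haveI := hinf.to_subtype
  -- pigeonhole: some poised label occurs infinitely often
  set g : ↥{n : ℕ | Poised (f n)} → {Δ // Δ ∈ (TermAux.bigC φ).powerset} :=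
    fun n => ⟨f n.1, Finset.mem_powerset.2 (hC n.1)⟩ with hg
  obtain ⟨Γ₀, hΓ₀⟩ := Finite.exists_infinite_fiber g
  have hOinf : {n : ℕ | Poised (f n) ∧ f n = Γ₀.1}.Infinite := by
    have h1 : (g ⁻¹' {Γ₀}).Infinite := Set.infinite_coe_iff.1 hΓ₀
    have h2 := h1.image (Set.injOn_of_injective Subtype.val_injective)
    apply h2.mono
    rintro x ⟨⟨n, hn⟩, hmem, rfl⟩
    refine ⟨hn, ?_⟩
    have : g ⟨n, hn⟩ = Γ₀ := hmem
    simpa [hg] using congrArg Subtype.val this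
  obtain ⟨w, hwmono, hw⟩ := TermAux.exists_strictMono_in hOinf
  -- the cumulative fulfilled sets along the occurrences of `Γ₀`
  set g2 : ℕ → Finset (LTL AP) := fun i =>
    (TermAux.bigC φ).filter (fun β => ∃ x, w 0 < x ∧ x ≤ w i ∧ β ∈ f x) with hg2
  have hmono : ∀ ⦃i j : ℕ⦄, i ≤ j → g2 i ⊆ g2 j := by
    intro i j hij β hβ
    rw [hg2, Finset.mem_filter] at hβ ⊢
    obtain ⟨hβ1, x, hx1, hx2, hx3⟩ := hβ
    exact ⟨hβ1, x, hx1, le_trans hx2 (hwmono.monotone hij), hx3⟩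
  -- stabilization
  have hstab : ∃ j, 1 ≤ j ∧ g2 j = g2 (j + 1) := by
    by_contra hc
    push_neg at hc
    have hcard : ∀ k, (g2 1).card + k ≤ (g2 (1 + k)).card := by
      intro k; induction k with
      | zero => simp
      | succ k ih =>
          have hss : g2 (1 + k) ⊂ g2 (1 + k + 1) :=
            (Finset.ssubset_iff_subset_ne).2
              ⟨hmono (Nat.le_succ _), hc (1 + k) (by omega)⟩
          have := Finset.card_lt_card hss
          have e : 1 + (k + 1) = 1 + k + 1 := rfl
          rw [e]; omega
    have hle : (g2 (1 + ((TermAux.bigC φ).card + 1))).card ≤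
        (TermAux.bigC φ).card :=
      Finset.card_le_card (Finset.filter_subset _ _)
    have := hcard ((TermAux.bigC φ).card + 1)
    omega
  obtain ⟨j, hj1, hjeq⟩ := hstab
  -- PRUNE applies at node `w (j+1)`, contradiction
  set m := w (j + 1) with hm
  have hfm : f m = Γ₀.1 := (hw (j + 1)).2
  have hwj : f (w j) = Γ₀.1 := (hw j).2
  have hw0 : f (w 0) = Γ₀.1 := (hw 0).2
  have hvm : w j < m := hwmono (lt_add_one j)
  have huv : w 0 < w j := hwmono (by omega)
  have hlen : (List.ofFn fun i : Fin m => f i).length = m := by simp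
  apply (h m).1
  refine Or.inr (Or.inr ⟨(hw (j + 1)).1, Or.inr (Or.inl ?_)⟩)
  refine ⟨w 0, w j, huv, by rw [hlen]; exact hvm, ?_, ?_, ?_⟩
  · rw [TermAux.labelAt_ofFn f (lt_trans huv hvm), hw0, hfm]
  · rw [TermAux.labelAt_ofFn f hvm, hwj, hfm]
  · rintro α β hev ⟨x, hvx, hxl, hβ⟩
    rw [hlen] at hxl
    rw [TermAux.labelAt_ofFn_append f hxl (f m) rfl] at hβ
    have hβC : β ∈ TermAux.bigC φ := hC x hβ
    have hβg2 : β ∈ g2 (j + 1) := by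
      rw [hg2, Finset.mem_filter]
      exact ⟨hβC, x, lt_trans huv hvx, hxl, hβ⟩
    rw [← hjeq, hg2, Finset.mem_filter] at hβg2
    obtain ⟨-, y, hy1, hy2, hy3⟩ := hβg2
    refine ⟨y, hy1, hy2, ?_⟩
    rw [TermAux.labelAt_ofFn f (lt_of_le_of_lt hy2 hvm)]
    exact hy3
end
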